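/- arXiv:1406.3000 — 8 statements merged into one kernel-verified Lean document; each statement's English description precedes it below -/
import Mathlib

section
/- Let p ≥ 1, let (X,d) be a complete separable metric space and let m be a doubling Borel measure on X with constant C_D such that (X,d,m) supports a p-Poincaré inequality for Lipschitz functions with constants τ, Λ. Then there exists a constant C > 0, depending only on C_D, τ, Λ and p, such that for every Lipschitz function f : X → ℝ and all points x, y ∈ X, |f(x) − f(y)| ≤ C d(x,y) [ ( M_m(|∇f|^p)(x) )^{1/p} + ( M_m(|∇f|^p)(y) )^{1/p} ], where |∇f| is the slope of f and M_m is the maximal operator with respect to m. -/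
open MeasureTheory Metric Filter Topology
open scoped ENNReal NNReal

/-- The slope of `f : X → ℝ` at `x`:
`|∇f|(x) = limsup_{y → x, y ≠ x} |f y − f x| / d(y,x)` (junk value `0` at isolated points). -/
noncomputable def mslope {X : Type*} [MetricSpace X] (f : X → ℝ) (x : X) : ℝ :=
  Filter.limsup (fun y => |f y - f x| / dist y x) (𝓝[≠] x)

/-- The Hardy–Littlewood maximal function of `h` with respect to the measure `μ`:
`M_μ h (x) = ⨆ r > 0, ⨍_{B(x,r)} |h| dμ`. -/
noncomputable def maximalFn {X : Type*} [MetricSpace X] [MeasurableSpace X]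
    (μ : MeasureTheory.Measure X) (h : X → ℝ) (x : X) : ℝ≥0∞ :=
  ⨆ r ∈ Set.Ioi (0 : ℝ),
    (∫⁻ y in Metric.ball x r, ENNReal.ofReal |h y| ∂μ) / μ (Metric.ball x r)


/-!
Telescoping over the balls `B(x, r/2ⁿ)`: by doubling and the Poincaré inequality consecutive
averages differ by at most `C_D τ (r/2ⁿ) (M_m(|∇f|^p)(x))^{1/p}`, and since `f` is continuous the
averages converge to `f x`. Hence `|f x − f_{B(x,r)}| ≲ r (M_m(|∇f|^p)(x))^{1/p}`. For `R = d(x,y)`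
the balls `B(x,2R) ⊆ B(y,4R)` have comparable measure, so their averages are close, and the
triangle inequality finishes the proof.
-/

section Average

variable {α : Type*} [MeasurableSpace α] {m : Measure α} {f : α → ℝ} {s t : Set α}

noncomputable def meanOscillation (m : Measure α) (f : α → ℝ) (s : Set α) : ℝ :=
  ⨍ y in s, |f y - ⨍ z in s, f z ∂m| ∂m

lemma setAverage_nonneg {g : α → ℝ} (hg : ∀ z, 0 ≤ g z) : 0 ≤ ⨍ z in s, g z ∂m := by
  rw [setAverage_eq]
  exact smul_nonneg (inv_nonneg.2 measureReal_nonneg) (integral_nonneg hg)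

lemma meanOscillation_nonneg : 0 ≤ meanOscillation m f s :=
  setAverage_nonneg fun _ => abs_nonneg _

lemma measureReal_mul_abs_setAverage_sub_le (hs : m s ≠ ∞) (hf : IntegrableOn f s m) (c : ℝ) :
    m.real s * |⨍ z in s, f z ∂m - c| ≤ ∫ z in s, |f z - c| ∂m :=
  calc m.real s * |⨍ z in s, f z ∂m - c| = |∫ z in s, (f z - c) ∂m| := by
        rw [integral_sub hf (integrableOn_const hs), setIntegral_const,
          ← measure_smul_setAverage f hs, smul_eq_mul, smul_eq_mul, ← mul_sub, abs_mul,
          abs_of_nonneg measureReal_nonneg]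
    _ ≤ ∫ z in s, |f z - c| ∂m := abs_integral_le_integral_abs

lemma abs_setAverage_sub_le_of_forall_abs_sub_le (hsm : MeasurableSet s) (hs₀ : m s ≠ 0)
    (hs : m s ≠ ∞) (hf : IntegrableOn f s m) {c K : ℝ} (hK : ∀ z ∈ s, |f z - c| ≤ K) :
    |⨍ z in s, f z ∂m - c| ≤ K := by
  refine le_of_mul_le_mul_left ?_ (ENNReal.toReal_pos hs₀ hs)
  calc m.real s * |⨍ z in s, f z ∂m - c| ≤ ∫ z in s, |f z - c| ∂m :=
        measureReal_mul_abs_setAverage_sub_le hs hf c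
    _ ≤ ∫ _ in s, K ∂m :=
        setIntegral_mono_on (hf.sub (integrableOn_const hs)).abs (integrableOn_const hs) hsm hK
    _ = m.real s * K := by rw [setIntegral_const, smul_eq_mul]

lemma abs_setAverage_sub_setAverage_le (hst : s ⊆ t) (hs₀ : m s ≠ 0) (ht : m t ≠ ∞)
    (hf : IntegrableOn f t m) {c : ℝ≥0} (hc : m t ≤ c * m s) :
    |⨍ z in s, f z ∂m - ⨍ z in t, f z ∂m| ≤ c * meanOscillation m f t := by
  have hs : m s ≠ ∞ := ne_top_of_le_ne_top ht (measure_mono hst)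
  have hc' : m.real t ≤ c * m.real s := by
    simpa only [measureReal_def, ENNReal.toReal_mul, ENNReal.coe_toReal]
      using ENNReal.toReal_mono (by finiteness) hc
  refine le_of_mul_le_mul_left ?_ (ENNReal.toReal_pos hs₀ hs)
  set a := ⨍ z in t, f z ∂m
  calc m.real s * |⨍ z in s, f z ∂m - a| ≤ ∫ z in s, |f z - a| ∂m :=
        measureReal_mul_abs_setAverage_sub_le hs (hf.mono_set hst) a
    _ ≤ ∫ z in t, |f z - a| ∂m :=
        setIntegral_mono_set (hf.sub (integrableOn_const ht)).abs
          (ae_of_all _ fun _ => abs_nonneg _) hst.eventuallyLE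
    _ = m.real t * meanOscillation m f t := (measure_smul_setAverage _ ht).symm
    _ ≤ c * m.real s * meanOscillation m f t := by gcongr; exact meanOscillation_nonneg
    _ = m.real s * (c * meanOscillation m f t) := by ring

end Average

section MetricMeasure

variable {X : Type*} [MetricSpace X]

lemma mslope_nonneg (f : X → ℝ) (x : X) : 0 ≤ mslope f x := by
  rw [mslope, limsup_eq]
  rcases eq_or_neBot (𝓝[≠] x) with h | h
  · simp [h]
  · refine Real.sInf_nonneg fun a ha => ?_
    obtain ⟨y, hy⟩ := (show ∀ᶠ y in 𝓝[≠] x, |f y - f x| / dist y x ≤ a from ha).exists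
    exact (div_nonneg (abs_nonneg _) dist_nonneg).trans hy

variable [MeasurableSpace X] {m : Measure X}

lemma setAverage_le_toReal_maximalFn {g : X → ℝ} (hg : ∀ z, 0 ≤ g z) {x : X} {r : ℝ}
    (hr : 0 < r) (hM : maximalFn m g x ≠ ∞) :
    ⨍ z in ball x r, g z ∂m ≤ (maximalFn m g x).toReal := by
  by_cases hint : IntegrableOn g (ball x r) m
  · refine (ENNReal.ofReal_le_iff_le_toReal hM).1 ?_
    rw [ofReal_setAverage hint (ae_of_all _ hg)]
    refine le_of_eq_of_le ?_ (le_biSup (fun r => (∫⁻ y in ball x r, ENNReal.ofReal |g y| ∂m) /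
      m (ball x r)) (Set.mem_Ioi.2 hr))
    simp only [abs_of_nonneg (hg _)]
  · rw [setAverage_eq, integral_undef hint, smul_zero]
    exact ENNReal.toReal_nonneg

lemma meanOscillation_le_of_poincare {f g : X → ℝ} (hg : ∀ z, 0 ≤ g z) {x : X}
    {p τ Λ : ℝ} (hp : 0 < p) (hτ : 0 ≤ τ) (hΛ : 0 < Λ)
    (hPI : ∀ r : ℝ, 0 < r →
      meanOscillation m f (ball x r) ≤ τ * r * (⨍ y in ball x (Λ * r), g y ∂m) ^ (1 / p))
    (hM : maximalFn m g x ≠ ∞) {r : ℝ} (hr : 0 < r) :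
    meanOscillation m f (ball x r) ≤ τ * (maximalFn m g x).toReal ^ (1 / p) * r := by
  have havg : ⨍ y in ball x (Λ * r), g y ∂m ≤ (maximalFn m g x).toReal :=
    setAverage_le_toReal_maximalFn hg (by positivity) hM
  have havg₀ : 0 ≤ ⨍ y in ball x (Λ * r), g y ∂m := setAverage_nonneg hg
  calc meanOscillation m f (ball x r) ≤ τ * r * (⨍ y in ball x (Λ * r), g y ∂m) ^ (1 / p) :=
        hPI r hr
    _ ≤ τ * r * (maximalFn m g x).toReal ^ (1 / p) := by gcongr
    _ = τ * (maximalFn m g x).toReal ^ (1 / p) * r := by ring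

variable [BorelSpace X] {f : X → ℝ} {L : ℝ≥0}

lemma LipschitzWith.integrableOn_ball (hf : LipschitzWith L f) {x : X} {r : ℝ}
    (hfin : m (ball x r) ≠ ∞) : IntegrableOn f (ball x r) m := by
  refine Measure.integrableOn_of_bounded (M := ‖f x‖ + L * r) hfin
    hf.continuous.aestronglyMeasurable ?_
  filter_upwards [ae_restrict_mem measurableSet_ball] with z hz
  calc ‖f z‖ ≤ ‖f x‖ + dist (f z) (f x) := norm_le_norm_add_const_of_dist_le le_rfl
    _ ≤ ‖f x‖ + L * r := by
        gcongr
        exact (hf.dist_le_mul z x).trans (by gcongr; exact (mem_ball.1 hz).le)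

lemma LipschitzWith.abs_setAverage_ball_sub_le (hf : LipschitzWith L f) {x : X} {r : ℝ}
    (h₀ : m (ball x r) ≠ 0) (hfin : m (ball x r) ≠ ∞) :
    |⨍ z in ball x r, f z ∂m - f x| ≤ L * r :=
  abs_setAverage_sub_le_of_forall_abs_sub_le measurableSet_ball h₀ hfin
    (hf.integrableOn_ball hfin) fun z hz =>
      (hf.dist_le_mul z x).trans (by gcongr; exact (mem_ball.1 hz).le)

variable {D : ℝ≥0}

theorem abs_sub_setAverage_ball_le (hf : LipschitzWith L f) {x : X}
    (hball : ∀ r : ℝ, 0 < r → 0 < m (ball x r) ∧ m (ball x r) < ⊤)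
    (hdbl : ∀ r : ℝ, 0 < r → m (ball x (2 * r)) ≤ D * m (ball x r))
    {K : ℝ} (hosc : ∀ r : ℝ, 0 < r → meanOscillation m f (ball x r) ≤ K * r)
    {r : ℝ} (hr : 0 < r) :
    |f x - ⨍ z in ball x r, f z ∂m| ≤ 2 * D * K * r := by
  set a : ℕ → ℝ := fun n => ⨍ z in ball x (r / 2 ^ n), f z ∂m
  have hpos : ∀ n : ℕ, 0 < r / 2 ^ n := fun n => by positivity
  have hlim : Tendsto a atTop (𝓝 (f x)) := by
    refine tendsto_iff_dist_tendsto_zero.2 (squeeze_zero (fun _ => dist_nonneg)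
      (fun n => (hf.abs_setAverage_ball_sub_le (hball _ (hpos n)).1.ne'
        (hball _ (hpos n)).2.ne : |a n - f x| ≤ L * (r / 2 ^ n))) ?_)
    simpa [div_eq_mul_inv, mul_assoc] using
      (tendsto_pow_atTop_nhds_zero_of_lt_one (by norm_num : (0 : ℝ) ≤ 2⁻¹) (by norm_num)).const_mul
        ((L : ℝ) * r)
  have hstep : ∀ n : ℕ, dist (a n) (a (n + 1)) ≤ 2 * D * K * r / 2 / 2 ^ n := by
    intro n
    have hhalf : r / 2 ^ n = 2 * (r / 2 ^ (n + 1)) := by rw [pow_succ]; field_simp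
    rw [dist_comm, Real.dist_eq]
    calc |a (n + 1) - a n| ≤ D * meanOscillation m f (ball x (r / 2 ^ n)) := by
          refine abs_setAverage_sub_setAverage_le
            (ball_subset_ball (by rw [hhalf]; linarith [hpos (n + 1)]))
            (hball _ (hpos _)).1.ne' (hball _ (hpos n)).2.ne
            (hf.integrableOn_ball (hball _ (hpos n)).2.ne) ?_
          rw [hhalf]
          exact hdbl _ (hpos _)
      _ ≤ D * (K * (r / 2 ^ n)) := by gcongr; exact hosc _ (hpos n)
      _ = 2 * D * K * r / 2 / 2 ^ n := by ring
  simpa [a, dist_comm, Real.dist_eq] using dist_le_of_le_geometric_two_of_tendsto₀ hstep hlim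

theorem abs_sub_le_of_meanOscillation_le (hf : LipschitzWith L f)
    (hball : ∀ (z : X) (r : ℝ), 0 < r → 0 < m (ball z r) ∧ m (ball z r) < ⊤)
    (hdbl : ∀ (z : X) (r : ℝ), 0 < r → m (ball z (2 * r)) ≤ D * m (ball z r))
    {x y : X} {Kx Ky : ℝ}
    (hx : ∀ r : ℝ, 0 < r → meanOscillation m f (ball x r) ≤ Kx * r)
    (hy : ∀ r : ℝ, 0 < r → meanOscillation m f (ball y r) ≤ Ky * r) :
    |f x - f y| ≤ 4 * (D + 1) ^ 2 * (Kx + Ky) * dist x y := by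
  have hKx : 0 ≤ Kx := by simpa using meanOscillation_nonneg.trans (hx 1 one_pos)
  have hKy : 0 ≤ Ky := by simpa using meanOscillation_nonneg.trans (hy 1 one_pos)
  rcases eq_or_ne x y with rfl | hxy
  · simp
  set R := dist x y with hRdef
  have hR : 0 < R := dist_pos.2 hxy
  have hxy_subset : ball x (2 * R) ⊆ ball y (4 * R) := ball_subset_ball' (by linarith)
  have hyx_subset : ball y (4 * R) ⊆ ball x (2 * (2 * (2 * R))) :=
    ball_subset_ball' (by rw [dist_comm]; linarith)
  have hmeasure : m (ball y (4 * R)) ≤ ↑(D * D) * m (ball x (2 * R)) :=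
    calc m (ball y (4 * R)) ≤ m (ball x (2 * (2 * (2 * R)))) := measure_mono hyx_subset
      _ ≤ D * (D * m (ball x (2 * R))) := by
          grw [hdbl x _ (by positivity), hdbl x _ (by positivity)]
      _ = ↑(D * D) * m (ball x (2 * R)) := by push_cast; ring
  have hmid : |⨍ z in ball x (2 * R), f z ∂m - ⨍ z in ball y (4 * R), f z ∂m|
      ≤ D * D * (Ky * (4 * R)) := by
    have hfin := (hball y (4 * R) (by positivity)).2.ne
    grw [abs_setAverage_sub_setAverage_le hxy_subset (hball x _ (by positivity)).1.ne' hfin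
      (hf.integrableOn_ball hfin) hmeasure, hy _ (by positivity)]
    push_cast; rfl
  have hxball := abs_sub_setAverage_ball_le hf (hball x) (hdbl x) hx (r := 2 * R) (by positivity)
  have hyball := abs_sub_setAverage_ball_le hf (hball y) (hdbl y) hy (r := 4 * R) (by positivity)
  have hD : (0 : ℝ) ≤ D := D.coe_nonneg
  calc |f x - f y| ≤ |f x - ⨍ z in ball x (2 * R), f z ∂m|
        + |⨍ z in ball x (2 * R), f z ∂m - ⨍ z in ball y (4 * R), f z ∂m|
        + |f y - ⨍ z in ball y (4 * R), f z ∂m| := by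
        rw [abs_sub_comm (f y)]
        exact (abs_sub_le _ _ _).trans (add_le_add_left (abs_sub_le _ _ _) _)
    _ ≤ 2 * D * Kx * (2 * R) + D * D * (Ky * (4 * R)) + 2 * D * Ky * (4 * R) := by
        gcongr
    _ ≤ 4 * (D + 1) ^ 2 * (Kx + Ky) * R := by
        nlinarith [mul_nonneg (mul_nonneg hD hKx) hR.le, mul_nonneg hKx hR.le,
          mul_nonneg hKy hR.le, mul_nonneg (mul_nonneg hD hKy) hR.le]

end MetricMeasure

lemma ENNReal.ofReal_le_ofReal_mul_rpow_add_rpow {a b : ℝ≥0∞} {c q t : ℝ} (hc : 0 < c)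
    (hq : 0 < q) (h : a ≠ ∞ → b ≠ ∞ → t ≤ c * (a.toReal ^ q + b.toReal ^ q)) :
    ENNReal.ofReal t ≤ ENNReal.ofReal c * (a ^ q + b ^ q) := by
  have hc' : ENNReal.ofReal c ≠ 0 := by simpa using hc
  rcases eq_or_ne a ∞ with rfl | ha
  · simp [ENNReal.top_rpow_of_pos hq, ENNReal.mul_top hc']
  rcases eq_or_ne b ∞ with rfl | hb
  · simp [ENNReal.top_rpow_of_pos hq, ENNReal.mul_top hc']
  calc ENNReal.ofReal t ≤ ENNReal.ofReal (c * (a.toReal ^ q + b.toReal ^ q)) :=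
        ENNReal.ofReal_le_ofReal (h ha hb)
    _ = ENNReal.ofReal c * (a ^ q + b ^ q) := by
        rw [ENNReal.ofReal_mul hc.le, ENNReal.ofReal_add (by positivity) (by positivity),
          ENNReal.toReal_rpow, ENNReal.toReal_rpow,
          ENNReal.ofReal_toReal (ENNReal.rpow_ne_top_of_nonneg hq.le ha),
          ENNReal.ofReal_toReal (ENNReal.rpow_ne_top_of_nonneg hq.le hb)]

/-- If `(X,d,m)` is a complete separable doubling metric measure space
(doubling constant `C_D`) supporting a `p`-Poincaré inequality for Lipschitz functions with
constants `τ, Λ` for some `p ≥ 1`, then there is `C > 0` depending only on `C_D, τ, Λ, p`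
such that for every Lipschitz `f : X → ℝ` and all `x, y ∈ X`,
`|f x − f y| ≤ C d(x,y) ((M_m(|∇f|^p) x)^{1/p} + (M_m(|∇f|^p) y)^{1/p})`. -/
theorem stmt1 (p C_D τ Λ : ℝ) (hp : 1 ≤ p) (hCD : 0 < C_D) (hτ : 0 < τ) (hΛ : 0 < Λ) :
    ∃ C : ℝ, 0 < C ∧
      ∀ (X : Type) [MetricSpace X] [MeasurableSpace X] [BorelSpace X],
        CompleteSpace X → TopologicalSpace.SeparableSpace X →
        ∀ (m : MeasureTheory.Measure X),
        -- `m` is doubling with constant `C_D`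
        (∀ (x : X) (r : ℝ), 0 < r → 0 < m (Metric.ball x r) ∧ m (Metric.ball x r) < ⊤) →
        (∀ (x : X) (r : ℝ), 0 < r →
            m (Metric.ball x (2 * r)) ≤ ENNReal.ofReal C_D * m (Metric.ball x r)) →
        -- `(X,d,m)` supports a `p`-Poincaré inequality for Lipschitz functions
        (∀ f : X → ℝ, (∃ L, LipschitzWith L f) → ∀ (x : X) (r : ℝ), 0 < r →
            ⨍ y in Metric.ball x r, |f y - ⨍ z in Metric.ball x r, f z ∂m| ∂m ≤
              τ * r * (⨍ y in Metric.ball x (Λ * r), mslope f y ^ p ∂m) ^ (1 / p)) →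
        -- conclusion
        ∀ f : X → ℝ, (∃ L, LipschitzWith L f) → ∀ x y : X,
          ENNReal.ofReal |f x - f y| ≤
            ENNReal.ofReal (C * dist x y) *
              ((maximalFn m (fun z => mslope f z ^ p) x) ^ (1 / p) +
                (maximalFn m (fun z => mslope f z ^ p) y) ^ (1 / p)) := by
  refine ⟨4 * τ * (C_D + 1) ^ 2, by positivity, ?_⟩
  intro X _ _ _ _ _ m hball hdbl hPI f ⟨L, hf⟩ x y
  rcases eq_or_ne x y with rfl | hxy
  · simp
  set g : X → ℝ := fun z => mslope f z ^ p
  have hg : ∀ z, 0 ≤ g z := fun z => Real.rpow_nonneg (mslope_nonneg f z) p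
  have hosc : ∀ z, maximalFn m g z ≠ ∞ → ∀ r : ℝ, 0 < r →
      meanOscillation m f (ball z r) ≤ τ * (maximalFn m g z).toReal ^ (1 / p) * r :=
    fun z hM _ hr => meanOscillation_le_of_poincare hg (by positivity) hτ.le hΛ
      (hPI f ⟨L, hf⟩ z) hM hr
  refine ENNReal.ofReal_le_ofReal_mul_rpow_add_rpow (mul_pos (by positivity) (dist_pos.2 hxy))
    (by positivity) fun hMx hMy => ?_
  have hD : (C_D.toNNReal : ℝ) = C_D := Real.coe_toNNReal _ hCD.le
  calc |f x - f y|
      ≤ 4 * (C_D.toNNReal + 1) ^ 2 * (τ * (maximalFn m g x).toReal ^ (1 / p)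
          + τ * (maximalFn m g y).toReal ^ (1 / p)) * dist x y :=
        abs_sub_le_of_meanOscillation_le hf hball hdbl (hosc x hMx) (hosc y hMy)
    _ = _ := by rw [hD]; ring
end

section
/- Let (X, Σ, μ) be a measure space, let g : X → (0,∞) be measurable, let A, B : X → [0,∞] be measurable, and let C > 0 be such that for every λ > 0, ∫_{{g ≤ λ}} A dμ ≤ C λ ∫_{{g > λ}} B dμ. Let f : (0,∞) → (0,∞) be continuously differentiable and strictly decreasing with f(λ) → 0 as λ → ∞, and assume that Φ(t) := ∫_0^t λ (−f'(λ)) dλ is finite for every t > 0. Then ∫_X f(g) A dμ ≤ C ∫_X Φ(g) B dμ, as an inequality in [0,∞]. -/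
/-!
Both sides are layer-cake integrals. Since `f (t) = ∫_t^∞ (-f')` and `Φ (t) = ∫_0^t λ (-f' λ) dλ`,
`∫ f(g) A dμ = ∫_0^∞ (-f'(λ)) ∫_{g<λ} A dμ dλ` and `∫ Φ(g) B dμ = ∫_0^∞ λ (-f'(λ)) ∫_{g>λ} B dμ dλ`,
and the hypothesis, applied at each level `λ`, compares the integrands. The measure `μ` need not
be σ-finite, so Tonelli is not available: the first identity is the layer-cake formula for `f ∘ g`
followed by the substitution `s = f(λ)`, the second is the layer-cake formula for the densities
`min (λ (-f' λ)) n`, followed by monotone convergence.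
-/

open MeasureTheory Filter Topology Set
open scoped ENNReal

lemma ContinuousOn.comp_measurable_of_forall_mem {α β : Type*} [MeasurableSpace α]
    [TopologicalSpace β] [MeasurableSpace β] [OpensMeasurableSpace β] {f : β → ℝ} {s : Set β}
    (hf : ContinuousOn f s) (hs : MeasurableSet s) {φ : α → β} (hφ : Measurable φ)
    (hφs : ∀ x, φ x ∈ s) : Measurable fun x => f (φ x) := by
  classical
  have h := (hf.measurable_piecewise (continuousOn_const (c := (0 : ℝ))) hs).comp hφ
  simpa [Function.comp_def, piecewise_eq_of_mem _ _ _ (hφs _)] using h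

lemma AntitoneOn.deriv_nonpos_of_isOpen {f : ℝ → ℝ} {s : Set ℝ} {t : ℝ} (hf : AntitoneOn f s)
    (hs : IsOpen s) (ht : t ∈ s) : deriv f t ≤ 0 :=
  derivWithin_of_isOpen (f := f) hs ht ▸ hf.derivWithin_nonpos

section LayerCake

variable {α : Type*} [MeasurableSpace α]

lemma lintegral_lintegral_Ioc_eq_lintegral_meas_lt_mul_of_bounded (μ : Measure α) {φ : α → ℝ}
    (hφ_nn : 0 ≤ᵐ[μ] φ) (hφ : AEMeasurable φ μ) {k : ℝ → ℝ≥0∞} (hk : Measurable k) {c : ℝ≥0∞}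
    (hc : c ≠ ∞) (hkc : ∀ t, k t ≤ c) :
    ∫⁻ x, (∫⁻ t in Ioc 0 (φ x), k t) ∂μ = ∫⁻ t in Ioi 0, μ {x | t < φ x} * k t := by
  have hk_ofReal : ∀ t, ENNReal.ofReal (k t).toReal = k t :=
    fun t => ENNReal.ofReal_toReal (ne_top_of_le_ne_top hc (hkc t))
  have hk_int : ∀ a b : ℝ, IntervalIntegrable (fun t => (k t).toReal) volume a b := fun a b =>
    (intervalIntegrable_const (c := c.toReal)).mono_fun'
      hk.ennreal_toReal.aestronglyMeasurable
      (ae_of_all _ fun t => by simpa using ENNReal.toReal_mono hc (hkc t))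
  have h_real := lintegral_comp_eq_lintegral_meas_lt_mul μ hφ_nn hφ (fun t _ => hk_int 0 t)
    (ae_of_all _ fun t => ENNReal.toReal_nonneg)
  simp only [hk_ofReal] at h_real
  rw [← h_real]
  refine lintegral_congr_ae (hφ_nn.mono fun x hx => ?_)
  beta_reduce
  rw [intervalIntegral.integral_of_le (show (0 : ℝ) ≤ φ x from hx),
    ofReal_integral_eq_lintegral_ofReal (hk_int 0 (φ x)).1
      (ae_of_all _ fun t => ENNReal.toReal_nonneg)]
  simp only [hk_ofReal]

theorem lintegral_lintegral_Ioc_eq_lintegral_meas_lt_mul (μ : Measure α) {φ : α → ℝ}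
    (hφ_nn : 0 ≤ᵐ[μ] φ) (hφ : AEMeasurable φ μ) {k : ℝ → ℝ≥0∞} (hk : Measurable k) :
    ∫⁻ x, (∫⁻ t in Ioc 0 (φ x), k t) ∂μ = ∫⁻ t in Ioi 0, μ {x | t < φ x} * k t := by
  set kₙ : ℕ → ℝ → ℝ≥0∞ := fun n t => min (k t) n
  have hk_iSup : ∀ t, ⨆ n, kₙ n t = k t := fun t => by
    rw [← inf_iSup_eq, ENNReal.iSup_natCast, inf_top_eq]
  have hkₙ_meas : ∀ n, Measurable (kₙ n) := fun n => hk.min measurable_const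
  have hkₙ_mono : Monotone kₙ := fun m n hmn t => min_le_min_left _ (by exact_mod_cast hmn)
  have hmeas_lt : Measurable fun t => μ {x | t < φ x} :=
    Antitone.measurable fun s t hst => measure_mono fun x (hx : t < φ x) => hst.trans_lt hx
  have hkₙ : ∀ n, ∫⁻ x, (∫⁻ t in Ioc 0 (φ x), kₙ n t) ∂μ =
      ∫⁻ t in Ioi 0, μ {x | t < φ x} * kₙ n t :=
    fun n => lintegral_lintegral_Ioc_eq_lintegral_meas_lt_mul_of_bounded μ hφ_nn hφ (hkₙ_meas n)
      (ENNReal.natCast_ne_top n) fun t => min_le_right _ _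
  calc ∫⁻ x, (∫⁻ t in Ioc 0 (φ x), k t) ∂μ
      = ∫⁻ x, (⨆ n, ∫⁻ t in Ioc 0 (φ x), kₙ n t) ∂μ := by
        simp_rw [← hk_iSup]
        exact lintegral_congr fun x => lintegral_iSup hkₙ_meas hkₙ_mono
    _ = ⨆ n, ∫⁻ x, (∫⁻ t in Ioc 0 (φ x), kₙ n t) ∂μ := by
        refine lintegral_iSup' (fun n => ?_)
          (ae_of_all _ fun x m n hmn => lintegral_mono (hkₙ_mono hmn))
        exact (Monotone.measurable (f := fun s => ∫⁻ t in Ioc 0 s, kₙ n t)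
          fun s t hst => lintegral_mono_set (Ioc_subset_Ioc_right hst)).comp_aemeasurable hφ
    _ = ⨆ n, ∫⁻ t in Ioi 0, μ {x | t < φ x} * kₙ n t := by simp_rw [hkₙ]
    _ = ∫⁻ t in Ioi 0, μ {x | t < φ x} * k t := by
        rw [← lintegral_iSup (f := fun n t => μ {x | t < φ x} * kₙ n t)
          (fun n => hmeas_lt.mul (hkₙ_meas n))
          (fun m n hmn t => mul_le_mul_right (hkₙ_mono hmn t) _)]
        simp_rw [← ENNReal.mul_iSup, hk_iSup]

theorem lintegral_comp_eq_lintegral_meas_gt_mul_of_strictAntiOn (μ : Measure α) {φ : α → ℝ}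
    (hφ : Measurable φ) (hφ_pos : ∀ x, 0 < φ x) {f : ℝ → ℝ} (hf_pos : ∀ t ∈ Ioi 0, 0 < f t)
    (hf : DifferentiableOn ℝ f (Ioi 0)) (hf_anti : StrictAntiOn f (Ioi 0))
    (hf_lim : Tendsto f atTop (𝓝 0)) :
    ∫⁻ x, ENNReal.ofReal (f (φ x)) ∂μ =
      ∫⁻ t in Ioi 0, μ {x | φ x < t} * ENNReal.ofReal (-deriv f t) := by
  have hf_cont : ContinuousOn f (Ioi 0) := hf.continuousOn
  have h_attained : ∀ x, ∀ s ∈ Ioi (0 : ℝ), s < f (φ x) → s ∈ f '' Ioi 0 := by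
    intro x s hs hsx
    obtain ⟨T, hfT, hφT⟩ :=
      ((hf_lim.eventually (gt_mem_nhds hs)).and (eventually_ge_atTop (φ x))).exists
    obtain ⟨t, ht, rfl⟩ := intermediate_value_Icc' hφT
      (hf_cont.mono fun t ht => (hφ_pos x).trans_le ht.1) ⟨hfT.le, hsx.le⟩
    exact ⟨t, (hφ_pos x).trans_le ht.1, rfl⟩
  have h_image_sub : f '' Ioi 0 ⊆ Ioi 0 := by
    rintro _ ⟨t, ht, rfl⟩
    exact hf_pos t ht
  calc ∫⁻ x, ENNReal.ofReal (f (φ x)) ∂μ = ∫⁻ s in Ioi 0, μ {x | s < f (φ x)} :=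
        lintegral_eq_lintegral_meas_lt μ (ae_of_all _ fun x => (hf_pos _ (hφ_pos x)).le)
          (hf_cont.comp_measurable_of_forall_mem measurableSet_Ioi hφ hφ_pos).aemeasurable
    _ = ∫⁻ s in f '' Ioi 0, μ {x | s < f (φ x)} := by
        rw [← lintegral_indicator measurableSet_Ioi, ← lintegral_indicator
          (measurableSet_Ioi.image_of_continuousOn_injOn hf_cont hf_anti.injOn)]
        refine lintegral_congr fun s => ?_
        by_cases hs : s ∈ f '' Ioi 0
        · rw [indicator_of_mem hs, indicator_of_mem (h_image_sub hs)]
        by_cases hs₀ : s ∈ Ioi 0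
        · rw [indicator_of_notMem hs, indicator_of_mem hs₀, ← measure_empty (μ := μ)]
          exact congrArg μ (eq_empty_of_forall_notMem fun x hx => hs (h_attained x s hs₀ hx))
        · rw [indicator_of_notMem hs, indicator_of_notMem hs₀]
    _ = ∫⁻ t in Ioi 0, ENNReal.ofReal |deriv f t| * μ {x | f t < f (φ x)} :=
        lintegral_image_eq_lintegral_abs_deriv_mul measurableSet_Ioi
          (fun t ht => (hf.differentiableAt (Ioi_mem_nhds ht)).hasDerivAt.hasDerivWithinAt)
          hf_anti.injOn _
    _ = ∫⁻ t in Ioi 0, μ {x | φ x < t} * ENNReal.ofReal (-deriv f t) := by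
        refine setLIntegral_congr_fun measurableSet_Ioi fun t ht => ?_
        have h_sets : {x | f t < f (φ x)} = {x | φ x < t} :=
          ext fun x => hf_anti.lt_iff_gt ht (hφ_pos x)
        rw [abs_of_nonpos (hf_anti.antitoneOn.deriv_nonpos_of_isOpen isOpen_Ioi ht), h_sets,
          mul_comm]

end LayerCake

theorem lintegral_comp_le_of_meas_le_mul_meas {X : Type*} [MeasurableSpace X] (ν ν' : Measure X)
    {g : X → ℝ} (hg : Measurable g) (hg_pos : ∀ x, 0 < g x) {C : ℝ} {f : ℝ → ℝ}
    (hf_pos : ∀ t ∈ Ioi 0, 0 < f t) (hf : DifferentiableOn ℝ f (Ioi 0))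
    (hf_anti : StrictAntiOn f (Ioi 0)) (hf_lim : Tendsto f atTop (𝓝 0))
    (hνν' : ∀ l : ℝ, 0 < l → ν {x | g x ≤ l} ≤ ENNReal.ofReal (C * l) * ν' {x | l < g x}) :
    ∫⁻ x, ENNReal.ofReal (f (g x)) ∂ν ≤
      ENNReal.ofReal C * ∫⁻ x, (∫⁻ l in Ioc 0 (g x), ENNReal.ofReal (l * -deriv f l)) ∂ν' := by
  have h_level : ∀ l ∈ Ioi (0 : ℝ), ν {x | g x < l} * ENNReal.ofReal (-deriv f l) ≤
      ENNReal.ofReal C * (ν' {x | l < g x} * ENNReal.ofReal (l * -deriv f l)) := fun l hl =>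
    calc ν {x | g x < l} * ENNReal.ofReal (-deriv f l)
        ≤ ENNReal.ofReal (C * l) * ν' {x | l < g x} * ENNReal.ofReal (-deriv f l) := by
          gcongr
          exact (measure_mono fun x (hx : g x < l) => hx.le).trans (hνν' l hl)
      _ = _ := by
          rw [ENNReal.ofReal_mul' hl.le, ENNReal.ofReal_mul'
            (neg_nonneg.2 (hf_anti.antitoneOn.deriv_nonpos_of_isOpen isOpen_Ioi hl))]
          ring
  calc ∫⁻ x, ENNReal.ofReal (f (g x)) ∂ν
      = ∫⁻ l in Ioi 0, ν {x | g x < l} * ENNReal.ofReal (-deriv f l) :=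
        lintegral_comp_eq_lintegral_meas_gt_mul_of_strictAntiOn ν hg hg_pos hf_pos hf hf_anti hf_lim
    _ ≤ ∫⁻ l in Ioi 0, ENNReal.ofReal C *
          (ν' {x | l < g x} * ENNReal.ofReal (l * -deriv f l)) :=
        setLIntegral_mono' measurableSet_Ioi h_level
    _ = _ := by
        rw [lintegral_const_mul' _ _ ENNReal.ofReal_ne_top]
        exact congrArg _ (lintegral_lintegral_Ioc_eq_lintegral_meas_lt_mul ν'
          (ae_of_all _ fun x => (hg_pos x).le) hg.aemeasurable
          (measurable_id.mul (measurable_deriv f).neg).ennreal_ofReal).symm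

theorem stmt8_general {X : Type*} [MeasurableSpace X] (μ : MeasureTheory.Measure X)
    (g : X → ℝ) (hg : Measurable g) (hgpos : ∀ x, 0 < g x)
    (A B : X → ℝ≥0∞) (hA : Measurable A) (hB : Measurable B)
    (C : ℝ)
    (f : ℝ → ℝ) (hfpos : ∀ t ∈ Set.Ioi (0 : ℝ), 0 < f t)
    (hfC1 : ContDiffOn ℝ 1 f (Set.Ioi 0))
    (hfdec : StrictAntiOn f (Set.Ioi 0))
    (hflim : Filter.Tendsto f Filter.atTop (nhds 0))
    (hhyp : ∀ l : ℝ, 0 < l →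
      ∫⁻ x in {x : X | g x ≤ l}, A x ∂μ ≤
        ENNReal.ofReal (C * l) * ∫⁻ x in {x : X | l < g x}, B x ∂μ) :
    ∫⁻ x, ENNReal.ofReal (f (g x)) * A x ∂μ ≤
      ENNReal.ofReal C *
        ∫⁻ x, (∫⁻ l in Set.Ioc (0 : ℝ) (g x), ENNReal.ofReal (l * (-(deriv f l)))) * B x ∂μ := by
  have hfg : Measurable fun x => ENNReal.ofReal (f (g x)) :=
    (hfC1.continuousOn.comp_measurable_of_forall_mem measurableSet_Ioi hg hgpos).ennreal_ofReal
  have hΦg : Measurable fun x => ∫⁻ l in Ioc 0 (g x), ENNReal.ofReal (l * -deriv f l) :=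
    (Monotone.measurable (f := fun t => ∫⁻ l in Ioc 0 t, ENNReal.ofReal (l * -deriv f l))
      fun s t hst => lintegral_mono_set (Ioc_subset_Ioc_right hst)).comp hg
  have h_levels : ∀ l : ℝ, 0 < l → μ.withDensity A {x | g x ≤ l} ≤
      ENNReal.ofReal (C * l) * μ.withDensity B {x | l < g x} := fun l hl => by
    rw [withDensity_apply _ (measurableSet_le hg measurable_const),
      withDensity_apply _ (measurableSet_lt measurable_const hg)]
    exact hhyp l hl
  have h := lintegral_comp_le_of_meas_le_mul_meas _ _ hg hgpos hfpos
    (hfC1.differentiableOn one_ne_zero) hfdec hflim h_levels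
  rw [lintegral_withDensity_eq_lintegral_mul _ hA hfg,
    lintegral_withDensity_eq_lintegral_mul _ hB hΦg] at h
  simpa only [Pi.mul_apply, mul_comm] using h

/-- Suppose `∫_{{g ≤ λ}} A dμ ≤ C λ ∫_{{g > λ}} B dμ` for all `λ > 0`,
`f : (0,∞) → (0,∞)` is continuously differentiable, strictly decreasing with `f(λ) → 0`
as `λ → ∞`, and `Φ(t) = ∫_0^t λ(−f'(λ)) dλ` is finite for all `t > 0`. Then
`∫_X f(g) A dμ ≤ C ∫_X Φ(g) B dμ` in `[0,∞]`. -/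
theorem stmt8 {X : Type*} [MeasurableSpace X] (μ : MeasureTheory.Measure X)
    (g : X → ℝ) (hg : Measurable g) (hgpos : ∀ x, 0 < g x)
    (A B : X → ℝ≥0∞) (hA : Measurable A) (hB : Measurable B)
    (C : ℝ) (hC : 0 < C)
    (f : ℝ → ℝ) (hfpos : ∀ t ∈ Set.Ioi (0 : ℝ), 0 < f t)
    (hfC1 : ContDiffOn ℝ 1 f (Set.Ioi 0))
    (hfdec : StrictAntiOn f (Set.Ioi 0))
    (hflim : Filter.Tendsto f Filter.atTop (nhds 0))
    (hΦfin : ∀ t : ℝ, 0 < t →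
      (∫⁻ l in Set.Ioc (0 : ℝ) t, ENNReal.ofReal (l * (-(deriv f l)))) < ⊤)
    (hhyp : ∀ l : ℝ, 0 < l →
      ∫⁻ x in {x : X | g x ≤ l}, A x ∂μ ≤
        ENNReal.ofReal (C * l) * ∫⁻ x in {x : X | l < g x}, B x ∂μ) :
    ∫⁻ x, ENNReal.ofReal (f (g x)) * A x ∂μ ≤
      ENNReal.ofReal C *
        ∫⁻ x, (∫⁻ l in Set.Ioc (0 : ℝ) (g x), ENNReal.ofReal (l * (-(deriv f l)))) * B x ∂μ :=
  stmt8_general μ g hg hgpos A B hA hB C f hfpos hfC1 hfdec hflim hhyp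
end

section
/- Let p > 1, let (X, Σ, m) be a measure space with 0 < m(X) < ∞, and let ρ : X → (0,∞) be measurable with ∫_X ρ dm < ∞ and ∫_X ρ^{−1/(p−1)} dm < ∞. For ε ∈ (0, 1/(2(p−1))) set r(ε) := (2+(1−p)ε)/(2+2(1−p)ε), s'(ε) := 2/((p−1)ε) and r'(ε) := (2+(1−p)ε)/((p−1)ε). Then liminf_{ε→0⁺} ε^p ( ∫_X ρ^{r'(ε)} dm )^{1/r'(ε)} ( ∫_X ρ^{−r'(ε)} dm )^{1/(r(ε) s'(ε))} ≤ (2/(p−1))^p · L_ρ, where L_ρ := liminf_{n→∞} n^{−p} ( ∫_X ρⁿ dm )^{1/n} ( ∫_X ρ^{−n} dm )^{1/n} ∈ [0,∞]. -/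
/-!
Evaluate the left-hand side along `ε_N = 2 / ((p - 1) (N + 1))`, which tends to `0⁺`. There
`r'(ε_N) = N`, `1 / (r(ε_N) s'(ε_N)) = (1 - 2 / (N + 1)) / N` and
`ε_N ^ p ≤ (2 / (p - 1)) ^ p N ^ (-p)`, so the `ε_N`-term is the `N`-th term of `L_ρ` times
`(∫ ρ^{-N}) ^ (-2 / (N (N + 1)))`. Since `ρ` is bounded on a set of positive measure,
`(∫ ρ^{-N}) ^ (1 / N) ≥ δ > 0` for all `N ≥ 1`, so this extra factor is at most
`δ ^ (-2 / (N + 1)) → 1`.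
-/

open MeasureTheory Filter Topology
open scoped ENNReal NNReal

/-- The exponent `r(ε) = (2+(1−p)ε)/(2+2(1−p)ε)`. -/
noncomputable def zr (p ε : ℝ) : ℝ := (2 + (1 - p) * ε) / (2 + 2 * (1 - p) * ε)

/-- The exponent `s'(ε) = 2/((p−1)ε)`. -/
noncomputable def zs' (p ε : ℝ) : ℝ := 2 / ((p - 1) * ε)

/-- The exponent `r'(ε) = (2+(1−p)ε)/((p−1)ε)`. -/
noncomputable def zr' (p ε : ℝ) : ℝ := (2 + (1 - p) * ε) / ((p - 1) * ε)

section Exponents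

variable {p N : ℝ}

lemma zr'_two_div (hp : 1 < p) (hN : 0 < N) : zr' p (2 / ((p - 1) * (N + 1))) = N := by
  have : p - 1 ≠ 0 := by linarith
  have : N + 1 ≠ 0 := by linarith
  unfold zr'
  field_simp
  ring

lemma one_div_zr_mul_zs'_two_div (hp : 1 < p) (hN : 1 < N) :
    1 / (zr p (2 / ((p - 1) * (N + 1))) * zs' p (2 / ((p - 1) * (N + 1)))) =
      N⁻¹ * (1 - 2 / (N + 1)) := by
  have : p - 1 ≠ 0 := by linarith
  have : N + 1 ≠ 0 := by linarith
  have : N - 1 ≠ 0 := by linarith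
  have hε : (1 - p) * (2 / ((p - 1) * (N + 1))) = -(2 / (N + 1)) := by field_simp; ring
  have hzr : zr p (2 / ((p - 1) * (N + 1))) = N / (N - 1) := by
    have hden : 2 + 2 * -(2 / (N + 1)) = 2 * (N - 1) / (N + 1) := by field_simp; ring
    rw [zr, mul_assoc, hε, hden]
    field_simp
    ring
  have hzs' : zs' p (2 / ((p - 1) * (N + 1))) = N + 1 := by
    rw [zs']; field_simp
  rw [hzr, hzs']
  field_simp
  ring

lemma ofReal_two_div_rpow (hp : 1 < p) (hN : 0 < N) :
    ENNReal.ofReal ((2 / ((p - 1) * (N + 1))) ^ p) =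
      ENNReal.ofReal ((2 / (p - 1)) ^ p) * ENNReal.ofReal ((N + 1) ^ (-p)) := by
  have : 0 < p - 1 := by linarith
  rw [← ENNReal.ofReal_mul (by positivity), div_mul_eq_div_div,
    Real.div_rpow (by positivity) (by positivity), Real.rpow_neg (by positivity), div_eq_mul_inv]

end Exponents

lemma ENNReal.rpow_one_sub_le_mul_rpow_neg {x δ : ℝ≥0∞} (hδ0 : δ ≠ 0) (hδ : δ ≠ ⊤) (hδx : δ ≤ x)
    {s : ℝ} (hs : 0 ≤ s) : x ^ (1 - s) ≤ x * δ ^ (-s) := by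
  have hδs : δ ^ (-s) ≠ 0 := (ENNReal.rpow_pos (pos_iff_ne_zero.2 hδ0) hδ).ne'
  rcases eq_or_ne x ⊤ with rfl | hx
  · simp [ENNReal.top_mul hδs]
  have hx0 : x ≠ 0 := (lt_of_lt_of_le (pos_iff_ne_zero.2 hδ0) hδx).ne'
  calc x ^ (1 - s) = x * x ^ (-s) := by
        rw [sub_eq_add_neg, ENNReal.rpow_add _ _ hx0 hx, ENNReal.rpow_one]
    _ ≤ x * δ ^ (-s) := by
        rw [ENNReal.rpow_neg, ENNReal.rpow_neg]
        gcongr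

lemma exists_pos_ofReal_le_lintegral_rpow_neg_rpow_inv {X : Type*} [MeasurableSpace X]
    {m : Measure X} (hm : m ≠ 0) {ρ : X → ℝ} (hmeas : Measurable ρ) (hpos : ∀ x, 0 < ρ x) :
    ∃ δ : ℝ, 0 < δ ∧ ∀ N : ℝ, 1 ≤ N →
      ENNReal.ofReal δ ≤ (∫⁻ x, ENNReal.ofReal (ρ x ^ (-N)) ∂m) ^ N⁻¹ := by
  obtain ⟨k, hk⟩ : ∃ k : ℕ, 0 < m {x | ρ x ≤ k} := by
    refine exists_measure_pos_of_not_measure_iUnion_null fun h => hm ?_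
    rw [← Measure.measure_univ_eq_zero, ← h]
    congr 1
    exact (Set.iUnion_eq_univ_iff.2 fun x => exists_nat_ge (ρ x)).symm
  set a := min (m {x | ρ x ≤ k}) 1
  have ha0 : a ≠ 0 := by simp [a, hk.ne']
  have ha1 : a ≤ 1 := min_le_right _ _
  have hatop : a ≠ ⊤ := ne_top_of_le_ne_top ENNReal.one_ne_top ha1
  refine ⟨a.toReal / (k + 1), div_pos (ENNReal.toReal_pos ha0 hatop) (by positivity), ?_⟩
  intro N hN
  have hN0 : 0 < N := by linarith
  set c := ENNReal.ofReal (((k : ℝ) + 1) ^ (-N))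
  have hmarkov : c * m {x | ρ x ≤ k} ≤ ∫⁻ x, ENNReal.ofReal (ρ x ^ (-N)) ∂m := by
    refine le_trans ?_ (mul_meas_ge_le_lintegral₀ ?_ c)
    · refine mul_le_mul_right (measure_mono fun x hx => ?_) c
      exact ENNReal.ofReal_le_ofReal
        (Real.rpow_le_rpow_of_nonpos (hpos x) (by linarith [show ρ x ≤ k from hx])
          (by linarith))
    · exact (hmeas.pow_const _).ennreal_ofReal.aemeasurable
  have hδN : ENNReal.ofReal (a.toReal / (k + 1)) ^ N ≤ c * m {x | ρ x ≤ k} := by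
    rw [div_eq_mul_inv, ENNReal.ofReal_mul ENNReal.toReal_nonneg, ENNReal.ofReal_toReal hatop,
      mul_comm, ENNReal.mul_rpow_of_nonneg _ _ hN0.le, ENNReal.ofReal_rpow_of_pos (by positivity),
      Real.inv_rpow (by positivity), ← Real.rpow_neg (by positivity)]
    gcongr
    exact (ENNReal.rpow_le_self_of_le_one ha1 hN).trans (min_le_left _ _)
  calc ENNReal.ofReal (a.toReal / (k + 1))
      = (ENNReal.ofReal (a.toReal / (k + 1)) ^ N) ^ N⁻¹ := by
        rw [← ENNReal.rpow_mul, mul_inv_cancel₀ hN0.ne', ENNReal.rpow_one]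
    _ ≤ (∫⁻ x, ENNReal.ofReal (ρ x ^ (-N)) ∂m) ^ N⁻¹ := by
        gcongr
        exact hδN.trans hmarkov

lemma ofReal_rpow_mul_lintegral_rpow_zr'_le {X : Type*} [MeasurableSpace X] {m : Measure X}
    {ρ : X → ℝ} {p N δ : ℝ} (hp : 1 < p) (hN : 1 < N) (hδ : 0 < δ)
    (hδN : ENNReal.ofReal δ ≤ (∫⁻ x, ENNReal.ofReal (ρ x ^ (-N)) ∂m) ^ N⁻¹) :
    ENNReal.ofReal ((2 / ((p - 1) * (N + 1))) ^ p) *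
        (∫⁻ x, ENNReal.ofReal (ρ x ^ zr' p (2 / ((p - 1) * (N + 1)))) ∂m) ^
          (1 / zr' p (2 / ((p - 1) * (N + 1)))) *
        (∫⁻ x, ENNReal.ofReal (ρ x ^ (-zr' p (2 / ((p - 1) * (N + 1))))) ∂m) ^
          (1 / (zr p (2 / ((p - 1) * (N + 1))) * zs' p (2 / ((p - 1) * (N + 1))))) ≤
      ENNReal.ofReal ((2 / (p - 1)) ^ p) * ENNReal.ofReal (δ ^ (-(2 / (N + 1)))) *
        (ENNReal.ofReal (N ^ (-p)) * (∫⁻ x, ENNReal.ofReal (ρ x ^ N) ∂m) ^ N⁻¹ *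
          (∫⁻ x, ENNReal.ofReal (ρ x ^ (-N)) ∂m) ^ N⁻¹) := by
  have hN0 : 0 < N := by linarith
  rw [zr'_two_div hp hN0, one_div_zr_mul_zs'_two_div hp hN, ofReal_two_div_rpow hp hN0, one_div,
    ENNReal.rpow_mul]
  set A := (∫⁻ x, ENNReal.ofReal (ρ x ^ N) ∂m) ^ N⁻¹
  set B := (∫⁻ x, ENNReal.ofReal (ρ x ^ (-N)) ∂m) ^ N⁻¹
  have hB : B ^ (1 - 2 / (N + 1)) ≤ B * ENNReal.ofReal (δ ^ (-(2 / (N + 1)))) := by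
    rw [← ENNReal.ofReal_rpow_of_pos hδ]
    exact ENNReal.rpow_one_sub_le_mul_rpow_neg (by simpa using hδ) ENNReal.ofReal_ne_top hδN
      (by positivity)
  have hpow : ENNReal.ofReal ((N + 1) ^ (-p)) ≤ ENNReal.ofReal (N ^ (-p)) :=
    ENNReal.ofReal_le_ofReal (Real.rpow_le_rpow_of_nonpos hN0 (by linarith) (by linarith))
  calc ENNReal.ofReal ((2 / (p - 1)) ^ p) * ENNReal.ofReal ((N + 1) ^ (-p)) * A *
        B ^ (1 - 2 / (N + 1))
      ≤ ENNReal.ofReal ((2 / (p - 1)) ^ p) * ENNReal.ofReal (N ^ (-p)) * A *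
          (B * ENNReal.ofReal (δ ^ (-(2 / (N + 1))))) := by gcongr
    _ = _ := by ring

lemma ENNReal.liminf_mul_le_of_tendsto {ι : Type*} {f : Filter ι} {u v : ι → ℝ≥0∞} {a : ℝ≥0∞}
    [f.NeBot] (hu : Tendsto u f (𝓝 a)) (ha0 : a ≠ 0) (ha : a ≠ ⊤) :
    liminf (u * v) f ≤ a * liminf v f :=
  hu.limsup_eq ▸ ENNReal.liminf_mul_le (.inl (hu.limsup_eq ▸ ha0)) (.inl (hu.limsup_eq ▸ ha))

theorem stmt9_general {X : Type*} [MeasurableSpace X] (m : MeasureTheory.Measure X) (p : ℝ)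
    (hp : 1 < p) (hX0 : 0 < m Set.univ)
    (ρ : X → ℝ) (hmeas : Measurable ρ) (hpos : ∀ x, 0 < ρ x) :
    Filter.liminf
      (fun ε : ℝ =>
        ENNReal.ofReal (ε ^ p) *
          (∫⁻ x, ENNReal.ofReal (ρ x ^ zr' p ε) ∂m) ^ (1 / zr' p ε) *
          (∫⁻ x, ENNReal.ofReal (ρ x ^ (-(zr' p ε))) ∂m) ^ (1 / (zr p ε * zs' p ε)))
      (nhdsWithin 0 (Set.Ioi 0)) ≤
    ENNReal.ofReal ((2 / (p - 1)) ^ p) *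
      Filter.liminf
        (fun n : ℕ =>
          ENNReal.ofReal ((n : ℝ) ^ (-p)) *
            (∫⁻ x, ENNReal.ofReal (ρ x ^ (n : ℝ)) ∂m) ^ ((n : ℝ)⁻¹) *
            (∫⁻ x, ENNReal.ofReal (ρ x ^ (-(n : ℝ))) ∂m) ^ ((n : ℝ)⁻¹))
        Filter.atTop := by
  obtain ⟨δ, hδ, hδN⟩ :=
    exists_pos_ofReal_le_lintegral_rpow_neg_rpow_inv (Measure.measure_univ_pos.1 hX0) hmeas hpos
  have hp1 : 0 < p - 1 := by linarith
  have hn1 : Tendsto (fun n : ℕ => (n : ℝ) + 1) atTop atTop :=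
    tendsto_natCast_atTop_atTop.atTop_add tendsto_const_nhds
  have hε : Tendsto (fun n : ℕ => 2 / ((p - 1) * ((n : ℝ) + 1))) atTop (𝓝[>] 0) :=
    tendsto_nhdsWithin_iff.2 ⟨tendsto_const_nhds.div_atTop (hn1.const_mul_atTop hp1),
      Eventually.of_forall fun n => by simp only [Set.mem_Ioi]; positivity⟩
  have hδpow :
      Tendsto (fun n : ℕ => ENNReal.ofReal (δ ^ (-(2 / ((n : ℝ) + 1))))) atTop (𝓝 1) := by
    have h : Tendsto (fun n : ℕ => δ ^ (-(2 / ((n : ℝ) + 1)))) atTop (𝓝 (δ ^ (-0 : ℝ))) :=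
      tendsto_const_nhds.rpow (tendsto_const_nhds.div_atTop hn1).neg (.inl hδ.ne')
    simpa using ENNReal.tendsto_ofReal h
  refine hε.liminf_le_liminf_comp.trans <| (liminf_le_liminf ?_).trans <|
    ENNReal.liminf_mul_le_of_tendsto
      (by simpa using ENNReal.Tendsto.const_mul hδpow (.inr ENNReal.ofReal_ne_top))
      (ENNReal.ofReal_pos.2 (by positivity)).ne' ENNReal.ofReal_ne_top
  filter_upwards [eventually_gt_atTop 1] with n hn
  exact ofReal_rpow_mul_lintegral_rpow_zr'_le hp (by exact_mod_cast hn) hδ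
    (hδN _ (by exact_mod_cast hn.le))

/-- For `p > 1`, `0 < m(X) < ∞`, `ρ : X → (0,∞)` with `∫ ρ dm < ∞` and
`∫ ρ^{−1/(p−1)} dm < ∞`, one has
`liminf_{ε→0⁺} ε^p (∫ ρ^{r'(ε)})^{1/r'(ε)} (∫ ρ^{−r'(ε)})^{1/(r(ε)s'(ε))} ≤ (2/(p−1))^p L_ρ`,
where `L_ρ = liminf_n n^{−p} (∫ ρ^n)^{1/n} (∫ ρ^{−n})^{1/n}`. -/
theorem stmt9 {X : Type*} [MeasurableSpace X] (m : MeasureTheory.Measure X) (p : ℝ)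
    (hp : 1 < p) (hX0 : 0 < m Set.univ) (hXfin : m Set.univ < ⊤)
    (ρ : X → ℝ) (hmeas : Measurable ρ) (hpos : ∀ x, 0 < ρ x)
    (h1 : ∫⁻ x, ENNReal.ofReal (ρ x) ∂m < ⊤)
    (h2 : ∫⁻ x, ENNReal.ofReal (ρ x ^ (-1 / (p - 1))) ∂m < ⊤) :
    Filter.liminf
      (fun ε : ℝ =>
        ENNReal.ofReal (ε ^ p) *
          (∫⁻ x, ENNReal.ofReal (ρ x ^ zr' p ε) ∂m) ^ (1 / zr' p ε) *
          (∫⁻ x, ENNReal.ofReal (ρ x ^ (-(zr' p ε))) ∂m) ^ (1 / (zr p ε * zs' p ε)))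
      (nhdsWithin 0 (Set.Ioi 0)) ≤
    ENNReal.ofReal ((2 / (p - 1)) ^ p) *
      Filter.liminf
        (fun n : ℕ =>
          ENNReal.ofReal ((n : ℝ) ^ (-p)) *
            (∫⁻ x, ENNReal.ofReal (ρ x ^ (n : ℝ)) ∂m) ^ ((n : ℝ)⁻¹) *
            (∫⁻ x, ENNReal.ofReal (ρ x ^ (-(n : ℝ))) ∂m) ^ ((n : ℝ)⁻¹))
        Filter.atTop :=
  stmt9_general m p hp hX0 ρ hmeas hpos
end

section
/- Let (X, Σ, m) be a measure space with m(X) < ∞ and let ρ : X → (0,∞) be measurable with m-essential supremum equal to ∞. Fix t ∈ (0,1) and define ρ_t : X → (0,∞) by ρ_t(x) := ρ(x)/t if ρ(x) ≤ 1 and ρ_t(x) := t·ρ(x) if ρ(x) > 1. Then there exists N ∈ ℕ such that for all n ≥ N, ∫_X ρ_tⁿ dm ≤ 2 tⁿ ∫_X ρⁿ dm, as an inequality in [0,∞]. -/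
open MeasureTheory Filter Topology
open scoped ENNReal NNReal

/-!
Pointwise, `ρ_tⁿ ≤ t⁻ⁿ + tⁿ ρⁿ`, so `∫ ρ_tⁿ ≤ t⁻ⁿ m(X) + tⁿ ∫ ρⁿ`. Since `ρ` is essentially
unbounded, the set `{2 / t² ≤ ρ}` has positive measure, hence `t²ⁿ ∫ ρⁿ ≥ 2ⁿ m{2 / t² ≤ ρ} → ∞`;
eventually it exceeds `m(X)`, i.e. `t⁻ⁿ m(X) ≤ tⁿ ∫ ρⁿ`.
-/

section EssUnbounded

variable {X : Type*} [MeasurableSpace X] {μ : Measure X} {ρ : X → ℝ}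

lemma measure_setOf_le_pos_of_essSup_eq_top
    (hess : essSup (fun x => ENNReal.ofReal (ρ x)) μ = ⊤) (c : ℝ) :
    0 < μ {x | c ≤ ρ x} := by
  refine pos_iff_ne_zero.2 fun hzero => ENNReal.ofReal_ne_top (r := c) (top_le_iff.1 ?_)
  rw [← hess]
  refine essSup_le_of_ae_le _ ?_
  filter_upwards [measure_eq_zero_iff_ae_notMem.1 hzero] with x hx
  exact ENNReal.ofReal_le_ofReal (le_of_not_ge hx)

lemma tendsto_ofReal_pow_mul_lintegral_pow_of_essSup_eq_top (hρ : Measurable ρ)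
    (hess : essSup (fun x => ENNReal.ofReal (ρ x)) μ = ⊤) {s : ℝ} (hs : 0 < s) :
    Tendsto (fun n : ℕ => ENNReal.ofReal (s ^ n) * ∫⁻ x, ENNReal.ofReal (ρ x ^ n) ∂μ)
      atTop (𝓝 ⊤) := by
  set S := {x | 2 / s ≤ ρ x}
  have hS : μ S ≠ 0 := (measure_setOf_le_pos_of_essSup_eq_top hess _).ne'
  have hgrow : Tendsto (fun n : ℕ => (2 : ℝ≥0∞) ^ n * μ S) atTop (𝓝 ⊤) := by
    simpa [ENNReal.top_mul hS] using ENNReal.Tendsto.mul_const (b := μ S)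
      (ENNReal.tendsto_pow_atTop_nhds_top_iff.2 ENNReal.one_lt_two) (.inl ENNReal.top_ne_zero)
  refine tendsto_nhds_top_mono' hgrow fun n => ?_
  have hmarkov : ENNReal.ofReal ((2 / s) ^ n) * μ S ≤ ∫⁻ x, ENNReal.ofReal (ρ x ^ n) ∂μ := by
    refine le_trans ?_ (mul_meas_ge_le_lintegral (by fun_prop) (ENNReal.ofReal ((2 / s) ^ n)))
    gcongr
    intro x hx
    exact ENNReal.ofReal_le_ofReal (pow_le_pow_left₀ (by positivity) hx n)
  calc (2 : ℝ≥0∞) ^ n * μ S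
      = ENNReal.ofReal (s ^ n) * (ENNReal.ofReal ((2 / s) ^ n) * μ S) := by
        rw [← mul_assoc, ← ENNReal.ofReal_mul (by positivity), ← mul_pow, mul_div_cancel₀ _ hs.ne',
          ENNReal.ofReal_pow zero_le_two, ENNReal.ofReal_ofNat]
    _ ≤ _ := by gcongr

end EssUnbounded

lemma pow_ite_div_mul_le {t r : ℝ} (ht : 0 < t) (hr : 0 ≤ r) (n : ℕ) :
    (if r ≤ 1 then r / t else t * r) ^ n ≤ (1 / t) ^ n + t ^ n * r ^ n := by
  split_ifs with h
  · have : (r / t) ^ n ≤ (1 / t) ^ n := by gcongr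
    linarith [pow_nonneg (mul_nonneg ht.le hr) n, mul_pow t r n]
  · rw [mul_pow]
    linarith [pow_nonneg (one_div_pos.2 ht).le n]

lemma lintegral_pow_ite_div_mul_le {X : Type*} [MeasurableSpace X] (μ : Measure X) {ρ : X → ℝ}
    (hpos : ∀ x, 0 ≤ ρ x) {t : ℝ} (ht : 0 < t) (n : ℕ) :
    ∫⁻ x, ENNReal.ofReal ((if ρ x ≤ 1 then ρ x / t else t * ρ x) ^ n) ∂μ ≤
      ENNReal.ofReal ((1 / t) ^ n) * μ Set.univ +
        ENNReal.ofReal (t ^ n) * ∫⁻ x, ENNReal.ofReal (ρ x ^ n) ∂μ :=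
  calc ∫⁻ x, ENNReal.ofReal ((if ρ x ≤ 1 then ρ x / t else t * ρ x) ^ n) ∂μ
      ≤ ∫⁻ x, ENNReal.ofReal ((1 / t) ^ n) +
          ENNReal.ofReal (t ^ n) * ENNReal.ofReal (ρ x ^ n) ∂μ := by
        refine lintegral_mono fun x => ?_
        have hρn := pow_nonneg (hpos x) n
        rw [← ENNReal.ofReal_mul (by positivity),
          ← ENNReal.ofReal_add (by positivity) (by positivity)]
        exact ENNReal.ofReal_le_ofReal (pow_ite_div_mul_le ht (hpos x) n)
    _ = _ := by
        rw [lintegral_add_left measurable_const, lintegral_const,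
          lintegral_const_mul' _ _ ENNReal.ofReal_ne_top]

theorem stmt11_general {X : Type*} [MeasurableSpace X] (m : MeasureTheory.Measure X)
    (hXfin : m Set.univ < ⊤)
    (ρ : X → ℝ) (hmeas : Measurable ρ) (hpos : ∀ x, 0 < ρ x)
    (hess : essSup (fun x => ENNReal.ofReal (ρ x)) m = ⊤)
    (t : ℝ) (ht0 : 0 < t) :
    ∃ N : ℕ, ∀ n : ℕ, N ≤ n →
      ∫⁻ x, ENNReal.ofReal ((if ρ x ≤ 1 then ρ x / t else t * ρ x) ^ n) ∂m ≤
        2 * ENNReal.ofReal (t ^ n) * ∫⁻ x, ENNReal.ofReal (ρ x ^ n) ∂m := by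
  obtain ⟨N, hN⟩ := eventually_atTop.1 <|
    (tendsto_ofReal_pow_mul_lintegral_pow_of_essSup_eq_top hmeas hess (pow_pos ht0 2)).eventually
      (lt_mem_nhds hXfin)
  refine ⟨N, fun n hn => ?_⟩
  set I := ∫⁻ x, ENNReal.ofReal (ρ x ^ n) ∂m
  have hsmall : ENNReal.ofReal ((1 / t) ^ n) * m Set.univ ≤ ENNReal.ofReal (t ^ n) * I :=
    calc ENNReal.ofReal ((1 / t) ^ n) * m Set.univ
        ≤ ENNReal.ofReal ((1 / t) ^ n) * (ENNReal.ofReal ((t ^ 2) ^ n) * I) := by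
          gcongr
          exact (hN n hn).le
      _ = ENNReal.ofReal (t ^ n) * I := by
          rw [← mul_assoc, ← ENNReal.ofReal_mul (by positivity), ← mul_pow]
          congr 3
          field_simp
  calc _ ≤ ENNReal.ofReal ((1 / t) ^ n) * m Set.univ + ENNReal.ofReal (t ^ n) * I :=
        lintegral_pow_ite_div_mul_le m (fun x => (hpos x).le) ht0 n
    _ ≤ ENNReal.ofReal (t ^ n) * I + ENNReal.ofReal (t ^ n) * I := by gcongr
    _ = 2 * ENNReal.ofReal (t ^ n) * I := by rw [mul_assoc, two_mul]

/-- Let `m(X) < ∞`, `ρ : X → (0,∞)` measurable with essential supremum `∞`,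
and `t ∈ (0,1)`. With `ρ_t := ρ/t` on `{ρ ≤ 1}` and `ρ_t := t·ρ` on `{ρ > 1}`, there is
`N ∈ ℕ` such that `∫ ρ_t^n dm ≤ 2 t^n ∫ ρ^n dm` for all `n ≥ N`. -/
theorem stmt11 {X : Type*} [MeasurableSpace X] (m : MeasureTheory.Measure X)
    (hXfin : m Set.univ < ⊤)
    (ρ : X → ℝ) (hmeas : Measurable ρ) (hpos : ∀ x, 0 < ρ x)
    (hess : essSup (fun x => ENNReal.ofReal (ρ x)) m = ⊤)
    (t : ℝ) (ht0 : 0 < t) (ht1 : t < 1) :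
    ∃ N : ℕ, ∀ n : ℕ, N ≤ n →
      ∫⁻ x, ENNReal.ofReal ((if ρ x ≤ 1 then ρ x / t else t * ρ x) ^ n) ∂m ≤
        2 * ENNReal.ofReal (t ^ n) * ∫⁻ x, ENNReal.ofReal (ρ x ^ n) ∂m :=
  stmt11_general m hXfin ρ hmeas hpos hess t ht0
end

section
/- Let p > 1, let (X, Σ, m) be a measure space with m(X) < ∞, and let ρ : X → (0,∞) be measurable with esssup_m ρ = ∞ and esssup_m (1/ρ) = ∞. For t ∈ (0,1) define ρ_t : X → (0,∞) by ρ_t := ρ/t on {ρ ≤ 1} and ρ_t := t·ρ on {ρ > 1}. Then L_{ρ_t} ≤ t² · L_ρ, where for a measurable η : X → (0,∞) one sets L_η := liminf_{n→∞} n^{−p} ( ∫_X ηⁿ dm )^{1/n} ( ∫_X η^{−n} dm )^{1/n} ∈ [0,∞]. -/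
/-!
For `σ = ρ_t` one has pointwise `σ ≤ max (1/t) (t ρ)` and `σ⁻¹ ≤ max (1/t) (t ρ⁻¹)`, hence
`∫ σ^{±n} ≤ t^{-n} m(X) + t^n ∫ ρ^{±n}`. Since `ρ` and `1/ρ` are essentially unbounded,
`∫ ρ^{±n}` eventually beats every geometric sequence, in particular `t^{-2n} m(X)`, so
`∫ σ^{±n} ≤ 2 t^n ∫ ρ^{±n}` for large `n`. Taking `n`-th roots, the `n`-th term of the sequence
defining `L_σ` is at most `4^{1/n} t²` times that of `L_ρ`, and `4^{1/n} → 1`.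
-/

open MeasureTheory Filter Topology
open scoped ENNReal NNReal

/-- The Zhikov quantity `L_η = liminf_{n→∞} n^{−p} (∫ η^n dm)^{1/n} (∫ η^{−n} dm)^{1/n}`,
as an element of `[0,∞]`. -/
noncomputable def Lconst {X : Type*} [MeasurableSpace X] (p : ℝ)
    (m : MeasureTheory.Measure X) (η : X → ℝ) : ℝ≥0∞ :=
  Filter.liminf
    (fun n : ℕ =>
      ENNReal.ofReal ((n : ℝ) ^ (-p)) *
        (∫⁻ x, ENNReal.ofReal (η x ^ (n : ℝ)) ∂m) ^ ((n : ℝ)⁻¹) *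
        (∫⁻ x, ENNReal.ofReal (η x ^ (-(n : ℝ))) ∂m) ^ ((n : ℝ)⁻¹))
    Filter.atTop

namespace ENNReal

theorem tendsto_rpow_inv_natCast {c : ℝ≥0∞} (hc0 : c ≠ 0) (hc : c ≠ ∞) :
    Tendsto (fun n : ℕ => c ^ (n : ℝ)⁻¹) atTop (𝓝 1) := by
  have hpos : 0 < c.toReal := toReal_pos hc0 hc
  have hreal : Tendsto (fun n : ℕ => c.toReal ^ (n : ℝ)⁻¹) atTop (𝓝 1) := by
    simpa [Function.comp_def] using (Real.continuousAt_const_rpow hpos.ne').tendsto.comp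
      (tendsto_inv_atTop_zero.comp tendsto_natCast_atTop_atTop)
  refine (ofReal_one ▸ tendsto_ofReal hreal).congr fun n => ?_
  rw [← ofReal_rpow_of_pos hpos, ofReal_toReal hc]

theorem liminf_le_mul_liminf_of_le_mul {ι : Type*} {f : Filter ι} [f.NeBot]
    {a b u : ι → ℝ≥0∞} {c : ℝ≥0∞}
    (hab : ∀ᶠ i in f, a i ≤ u i * b i) (hu : Tendsto u f (𝓝 c)) (hc0 : c ≠ 0) (hc : c ≠ ∞) :
    liminf a f ≤ c * liminf b f := by
  rw [← hu.limsup_eq] at hc0 hc ⊢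
  exact (liminf_le_liminf hab).trans (liminf_mul_le (.inl hc0) (.inl hc))

theorem rpow_inv_natCast_le_of_le_mul_pow {a b c T : ℝ≥0∞} {n : ℕ} (hn : n ≠ 0)
    (h : a ≤ c * T ^ n * b) : a ^ (n : ℝ)⁻¹ ≤ c ^ (n : ℝ)⁻¹ * T * b ^ (n : ℝ)⁻¹ := by
  have hinv : (0 : ℝ) ≤ (n : ℝ)⁻¹ := by positivity
  refine (rpow_le_rpow h hinv).trans_eq ?_
  rw [mul_rpow_of_nonneg _ _ hinv, mul_rpow_of_nonneg _ _ hinv,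
    ← rpow_natCast, ← rpow_mul, mul_inv_cancel₀ (Nat.cast_ne_zero.mpr hn),
    rpow_one]

end ENNReal

section Moments

variable {X : Type*} [MeasurableSpace X] {μ : Measure X}

theorem measure_lt_ne_zero_of_essSup_eq_top {g : X → ℝ≥0∞} (hg : essSup g μ = ∞) {a : ℝ≥0∞}
    (ha : a ≠ ∞) : μ {x | a < g x} ≠ 0 := by
  intro h
  have hle : essSup g μ ≤ a := essSup_le_of_ae_le a <| by
    rw [EventuallyLE, ae_iff]; simpa only [not_le] using h
  exact ha (top_le_iff.mp (hg ▸ hle))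

/-- Markov's inequality on `{g > 2 / c}`, a set of positive measure because `g` is essentially
unbounded, gives `c ^ n * ∫⁻ g ^ n ≥ 2 ^ n * μ {g > 2 / c}`. -/
theorem tendsto_const_pow_mul_lintegral_pow_nhds_top {g : X → ℝ≥0∞} (hg : Measurable g)
    (hess : essSup g μ = ∞) {c : ℝ≥0∞} (hc0 : c ≠ 0) (hc : c ≠ ∞) :
    Tendsto (fun n : ℕ => c ^ n * ∫⁻ x, g x ^ n ∂μ) atTop (𝓝 ∞) := by
  set a := 2 / c
  have hca : c * a = 2 := ENNReal.mul_div_cancel hc0 hc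
  have hS : μ {x | a < g x} ≠ 0 :=
    measure_lt_ne_zero_of_essSup_eq_top hess (ENNReal.div_ne_top (by simp) hc0)
  have hmarkov : ∀ n : ℕ, 2 ^ n * μ {x | a < g x} ≤ c ^ n * ∫⁻ x, g x ^ n ∂μ := fun n =>
    calc 2 ^ n * μ {x | a < g x} = c ^ n * (a ^ n * μ {x | a < g x}) := by
          rw [← hca, mul_pow, mul_assoc]
      _ ≤ c ^ n * (a ^ n * μ {x | a ^ n ≤ g x ^ n}) := by
          gcongr with x
          exact fun hx => pow_le_pow_left₀ (zero_le (a := a)) hx.le n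
      _ ≤ c ^ n * ∫⁻ x, g x ^ n ∂μ := by gcongr; exact mul_meas_ge_le_lintegral (hg.pow_const n) _
  refine tendsto_nhds_top_mono ?_ (.of_forall hmarkov)
  simpa [ENNReal.top_mul hS] using ENNReal.Tendsto.mul_const (b := μ {x | a < g x})
    (ENNReal.tendsto_pow_atTop_nhds_top_iff.mpr ENNReal.one_lt_two) (.inl ENNReal.top_ne_zero)

theorem eventually_lintegral_pow_le {g h : X → ℝ≥0∞} (hg : Measurable g) (hμ : μ Set.univ ≠ ∞)
    (hess : essSup g μ = ∞) {T : ℝ≥0∞} (hT0 : T ≠ 0) (hT : T ≠ ∞)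
    (hh : ∀ x, h x ≤ T⁻¹ ⊔ T * g x) :
    ∀ᶠ n : ℕ in atTop, ∫⁻ x, h x ^ n ∂μ ≤ 2 * T ^ n * ∫⁻ x, g x ^ n ∂μ := by
  have hpt : ∀ (n : ℕ) x, h x ^ n ≤ T⁻¹ ^ n + T ^ n * g x ^ n := fun n x => by
    rcases le_max_iff.mp (hh x) with hx | hx
    · exact (pow_le_pow_left₀ zero_le hx n).trans le_self_add
    · exact (pow_le_pow_left₀ zero_le hx n).trans_eq (mul_pow ..) |>.trans le_add_self
  have hlarge := (tendsto_const_pow_mul_lintegral_pow_nhds_top hg hess (pow_ne_zero 2 hT0)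
    (ENNReal.pow_ne_top hT)).eventually (eventually_ge_nhds hμ.lt_top)
  filter_upwards [hlarge] with n hn
  calc ∫⁻ x, h x ^ n ∂μ ≤ ∫⁻ x, T⁻¹ ^ n + T ^ n * g x ^ n ∂μ := lintegral_mono (hpt n)
    _ = T⁻¹ ^ n * μ Set.univ + T ^ n * ∫⁻ x, g x ^ n ∂μ := by
      rw [lintegral_add_left measurable_const, lintegral_const,
        lintegral_const_mul' _ _ (ENNReal.pow_ne_top hT)]
    _ ≤ T⁻¹ ^ n * ((T ^ 2) ^ n * ∫⁻ x, g x ^ n ∂μ) + T ^ n * ∫⁻ x, g x ^ n ∂μ := by gcongr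
    _ = 2 * T ^ n * ∫⁻ x, g x ^ n ∂μ := by
      rw [← mul_assoc, ← mul_pow, sq, ← mul_assoc, ENNReal.inv_mul_cancel hT0 hT, one_mul,
        mul_assoc, two_mul]

end Moments

section Zhikov

variable {X : Type*} [MeasurableSpace X]

noncomputable def zhikovSeq (p : ℝ) (μ : Measure X) (g : X → ℝ≥0∞) (n : ℕ) : ℝ≥0∞ :=
  ENNReal.ofReal ((n : ℝ) ^ (-p)) * (∫⁻ x, g x ^ n ∂μ) ^ (n : ℝ)⁻¹ *
    (∫⁻ x, (g x)⁻¹ ^ n ∂μ) ^ (n : ℝ)⁻¹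

theorem Lconst_eq_liminf_zhikovSeq (p : ℝ) (μ : Measure X) {η : X → ℝ} (hη : ∀ x, 0 < η x) :
    Lconst p μ η = liminf (zhikovSeq p μ fun x => ENNReal.ofReal (η x)) atTop := by
  have hpow : ∀ (n : ℕ) x, ENNReal.ofReal (η x ^ (n : ℝ)) = ENNReal.ofReal (η x) ^ n :=
    fun n x => by rw [Real.rpow_natCast, ENNReal.ofReal_pow (hη x).le]
  have hpow_neg : ∀ (n : ℕ) x,
      ENNReal.ofReal (η x ^ (-(n : ℝ))) = (ENNReal.ofReal (η x))⁻¹ ^ n := fun n x => by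
    rw [Real.rpow_neg (hη x).le, Real.rpow_natCast, ← inv_pow,
      ENNReal.ofReal_pow (inv_nonneg.mpr (hη x).le), ENNReal.ofReal_inv_of_pos (hη x)]
  unfold Lconst zhikovSeq
  simp only [hpow, hpow_neg]

variable {p : ℝ} {μ : Measure X} {g h : X → ℝ≥0∞} {T : ℝ≥0∞}

theorem eventually_zhikovSeq_le (hg : Measurable g) (hμ : μ Set.univ ≠ ∞)
    (hess : essSup g μ = ∞) (hess_inv : essSup (fun x => (g x)⁻¹) μ = ∞)
    (hT0 : T ≠ 0) (hT : T ≠ ∞)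
    (hh : ∀ x, h x ≤ T⁻¹ ⊔ T * g x) (hh_inv : ∀ x, (h x)⁻¹ ≤ T⁻¹ ⊔ T * (g x)⁻¹) :
    ∀ᶠ n : ℕ in atTop,
      zhikovSeq p μ h n ≤ 2 ^ (n : ℝ)⁻¹ * 2 ^ (n : ℝ)⁻¹ * T ^ 2 * zhikovSeq p μ g n := by
  filter_upwards [eventually_lintegral_pow_le hg hμ hess hT0 hT hh,
    eventually_lintegral_pow_le hg.inv hμ hess_inv hT0 hT hh_inv, eventually_ne_atTop 0]
    with n hpos hneg hn
  calc zhikovSeq p μ h n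
      ≤ ENNReal.ofReal ((n : ℝ) ^ (-p)) * (2 ^ (n : ℝ)⁻¹ * T * (∫⁻ x, g x ^ n ∂μ) ^ (n : ℝ)⁻¹) *
          (2 ^ (n : ℝ)⁻¹ * T * (∫⁻ x, (g x)⁻¹ ^ n ∂μ) ^ (n : ℝ)⁻¹) := by
        unfold zhikovSeq
        gcongr
        exacts [ENNReal.rpow_inv_natCast_le_of_le_mul_pow hn hpos,
          ENNReal.rpow_inv_natCast_le_of_le_mul_pow hn hneg]
    _ = 2 ^ (n : ℝ)⁻¹ * 2 ^ (n : ℝ)⁻¹ * T ^ 2 * zhikovSeq p μ g n := by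
        unfold zhikovSeq; ring

theorem liminf_zhikovSeq_le (hg : Measurable g) (hμ : μ Set.univ ≠ ∞)
    (hess : essSup g μ = ∞) (hess_inv : essSup (fun x => (g x)⁻¹) μ = ∞)
    (hT0 : T ≠ 0) (hT : T ≠ ∞)
    (hh : ∀ x, h x ≤ T⁻¹ ⊔ T * g x) (hh_inv : ∀ x, (h x)⁻¹ ≤ T⁻¹ ⊔ T * (g x)⁻¹) :
    liminf (zhikovSeq p μ h) atTop ≤ T ^ 2 * liminf (zhikovSeq p μ g) atTop := by
  have hroot := ENNReal.tendsto_rpow_inv_natCast two_ne_zero ENNReal.ofNat_ne_top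
  have hu : Tendsto (fun n : ℕ => 2 ^ (n : ℝ)⁻¹ * 2 ^ (n : ℝ)⁻¹ * T ^ 2) atTop (𝓝 (T ^ 2)) := by
    simpa using ENNReal.Tendsto.mul_const
      (ENNReal.Tendsto.mul hroot (.inl one_ne_zero) hroot (.inl one_ne_zero)) (.inl (by simp))
  exact ENNReal.liminf_le_mul_liminf_of_le_mul
    (eventually_zhikovSeq_le hg hμ hess hess_inv hT0 hT hh hh_inv) hu
    (pow_ne_zero 2 hT0) (ENNReal.pow_ne_top hT)

end Zhikov

/-- The paper's `ρ_t` is `rescale t ∘ ρ`. -/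
noncomputable def rescale (t r : ℝ) : ℝ := if r ≤ 1 then r / t else t * r

section Rescale

variable {r t : ℝ}

theorem rescale_pos (hr : 0 < r) (ht : 0 < t) : 0 < rescale t r := by
  unfold rescale; split_ifs <;> positivity

theorem rescale_le_max (ht : 0 < t) : rescale t r ≤ max t⁻¹ (t * r) := by
  unfold rescale; split_ifs with h
  · exact le_max_of_le_left (by simpa only [one_div] using div_le_div_of_nonneg_right h ht.le)
  · exact le_max_right _ _

theorem inv_rescale_le_max (ht : 0 < t) : (rescale t r)⁻¹ ≤ max t⁻¹ (t * r⁻¹) := by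
  unfold rescale; split_ifs with h
  · exact le_max_of_le_right (by rw [inv_div, div_eq_mul_inv])
  · refine le_max_of_le_left ?_
    rw [mul_inv]
    exact mul_le_of_le_one_right (by positivity) (inv_le_one_of_one_le₀ (not_le.mp h).le)

theorem ofReal_rescale_le (ht : 0 < t) :
    ENNReal.ofReal (rescale t r) ≤ (ENNReal.ofReal t)⁻¹ ⊔ ENNReal.ofReal t * ENNReal.ofReal r := by
  rw [← ENNReal.ofReal_inv_of_pos ht, ← ENNReal.ofReal_mul ht.le, ← ENNReal.ofReal_max]
  exact ENNReal.ofReal_le_ofReal (rescale_le_max ht)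

theorem inv_ofReal_rescale_le (hr : 0 < r) (ht : 0 < t) :
    (ENNReal.ofReal (rescale t r))⁻¹ ≤
      (ENNReal.ofReal t)⁻¹ ⊔ ENNReal.ofReal t * (ENNReal.ofReal r)⁻¹ := by
  rw [← ENNReal.ofReal_inv_of_pos (rescale_pos hr ht), ← ENNReal.ofReal_inv_of_pos ht,
    ← ENNReal.ofReal_inv_of_pos hr, ← ENNReal.ofReal_mul ht.le, ← ENNReal.ofReal_max]
  exact ENNReal.ofReal_le_ofReal (inv_rescale_le_max ht)

end Rescale

theorem stmt12_general {X : Type*} [MeasurableSpace X] (m : MeasureTheory.Measure X) (p : ℝ)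
    (hXfin : m Set.univ < ⊤)
    (ρ : X → ℝ) (hmeas : Measurable ρ) (hpos : ∀ x, 0 < ρ x)
    (hess : essSup (fun x => ENNReal.ofReal (ρ x)) m = ⊤)
    (hessinv : essSup (fun x => ENNReal.ofReal ((ρ x)⁻¹)) m = ⊤)
    (t : ℝ) (ht0 : 0 < t) :
    Lconst p m (fun x => if ρ x ≤ 1 then ρ x / t else t * ρ x) ≤
      ENNReal.ofReal (t ^ 2) * Lconst p m ρ := by
  change Lconst p m (fun x => rescale t (ρ x)) ≤ _
  have hessinv' : essSup (fun x => (ENNReal.ofReal (ρ x))⁻¹) m = ⊤ := by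
    simpa only [ENNReal.ofReal_inv_of_pos (hpos _)] using hessinv
  rw [Lconst_eq_liminf_zhikovSeq p m fun x => rescale_pos (hpos x) ht0,
    Lconst_eq_liminf_zhikovSeq p m hpos, ENNReal.ofReal_pow ht0.le]
  exact liminf_zhikovSeq_le hmeas.ennreal_ofReal hXfin.ne hess hessinv'
    (ENNReal.ofReal_pos.mpr ht0).ne' ENNReal.ofReal_ne_top
    (fun _ => ofReal_rescale_le ht0) (fun x => inv_ofReal_rescale_le (hpos x) ht0)

/-- Let `p > 1`, `m(X) < ∞`, and `ρ : X → (0,∞)` with both `ρ` and `1/ρ`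
essentially unbounded. For `t ∈ (0,1)` let `ρ_t := ρ/t` on `{ρ ≤ 1}` and `ρ_t := t·ρ` on
`{ρ > 1}`. Then `L_{ρ_t} ≤ t² L_ρ`. -/
theorem stmt12 {X : Type*} [MeasurableSpace X] (m : MeasureTheory.Measure X) (p : ℝ)
    (hp : 1 < p) (hXfin : m Set.univ < ⊤)
    (ρ : X → ℝ) (hmeas : Measurable ρ) (hpos : ∀ x, 0 < ρ x)
    (hess : essSup (fun x => ENNReal.ofReal (ρ x)) m = ⊤)
    (hessinv : essSup (fun x => ENNReal.ofReal ((ρ x)⁻¹)) m = ⊤)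
    (t : ℝ) (ht0 : 0 < t) (ht1 : t < 1) :
    Lconst p m (fun x => if ρ x ≤ 1 then ρ x / t else t * ρ x) ≤
      ENNReal.ofReal (t ^ 2) * Lconst p m ρ :=
  stmt12_general m p hXfin ρ hmeas hpos hess hessinv t ht0
end

section
/- Let p > 1, let (X, Σ, m) be a measure space with 0 < m(X) < ∞, and let ρ : X → (0,∞) be measurable with esssup_m ρ < ∞ and esssup_m (1/ρ) = ∞. For t > 0 define ρ_t : X → (0,∞) by ρ_t := ρ/t on {ρ ≤ t} and ρ_t := ρ on {ρ > t}. Then L_{ρ_t} ≤ 2 t (1 + (esssup_m ρ)^{−1}) · L_ρ, where for a measurable η : X → (0,∞) one sets L_η := liminf_{n→∞} n^{−p} ( ∫_X ηⁿ dm )^{1/n} ( ∫_X η^{−n} dm )^{1/n} ∈ [0,∞]. -/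
open MeasureTheory Filter Topology
open scoped ENNReal NNReal

/-!
Compare the moments of `ρ_t` with those of `ρ`, one `n` at a time. Since `ρ_t ≤ 1 + S` a.e.
(`S = esssup ρ`) while `ρ ≥ S/2` on a set `E` of positive measure,
`∫ ρ_tⁿ ≤ ((1 + S)/(S/2))ⁿ (m X / m E) ∫ ρⁿ`. Since `ρ_t⁻¹ ≤ max (t ρ⁻¹) t⁻¹`,
`∫ ρ_t⁻ⁿ ≤ tⁿ ∫ ρ⁻ⁿ + t⁻ⁿ m X`, and as `1/ρ` is essentially unbounded, `ρ⁻¹ ≥ t⁻²` on a set `F`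
of positive measure, which absorbs the second term: `∫ ρ_t⁻ⁿ ≤ tⁿ (1 + m X / m F) ∫ ρ⁻ⁿ`.
After taking `n`-th roots the measure factors tend to `1`, so the liminf only picks up
`(1 + S)/(S/2) · t = 2t(1 + S⁻¹)`.
-/

namespace ENNReal

theorem tendsto_rpow_inv_natCast_nhds_one {c : ℝ≥0∞} (h0 : c ≠ 0) (htop : c ≠ ⊤) :
    Tendsto (fun n : ℕ => c ^ (n : ℝ)⁻¹) atTop (𝓝 1) := by
  have hc : 0 < c.toReal := toReal_pos h0 htop
  have hreal : Tendsto (fun n : ℕ => c.toReal ^ (n : ℝ)⁻¹) atTop (𝓝 1) := by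
    simpa [Function.comp_def] using ((Real.continuous_const_rpow hc.ne').tendsto 0).comp
      tendsto_inv_atTop_nhds_zero_nat
  refine (ofReal_one ▸ tendsto_ofReal hreal).congr fun n => ?_
  rw [← ofReal_rpow_of_pos hc, ofReal_toReal htop]

theorem liminf_le_mul_liminf_of_tendsto {ι : Type*} {l : Filter ι} [l.NeBot]
    {a b c : ι → ℝ≥0∞} {K : ℝ≥0∞} (hK0 : K ≠ 0) (hK : K ≠ ⊤) (hc : Tendsto c l (𝓝 K))
    (h : ∀ᶠ i in l, a i ≤ c i * b i) : liminf a l ≤ K * liminf b l :=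
  calc liminf a l ≤ liminf (c * b) l := liminf_le_liminf h
    _ ≤ limsup c l * liminf b l := liminf_mul_le (by simp [hc.limsup_eq, hK0])
        (by simp [hc.limsup_eq, hK])
    _ = K * liminf b l := by rw [hc.limsup_eq]

theorem rpow_inv_le_of_le_ofReal_rpow_mul {x y c : ℝ≥0∞} {b r : ℝ} (hb : 0 ≤ b) (hr : 0 < r)
    (h : x ≤ ENNReal.ofReal (b ^ r) * c * y) :
    x ^ r⁻¹ ≤ ENNReal.ofReal b * c ^ r⁻¹ * y ^ r⁻¹ := by
  have hr' : 0 ≤ r⁻¹ := inv_nonneg.2 hr.le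
  calc x ^ r⁻¹ ≤ (ENNReal.ofReal (b ^ r) * c * y) ^ r⁻¹ := rpow_le_rpow h hr'
    _ = ENNReal.ofReal b * c ^ r⁻¹ * y ^ r⁻¹ := by
      rw [mul_rpow_of_nonneg _ _ hr', mul_rpow_of_nonneg _ _ hr',
        ofReal_rpow_of_nonneg (Real.rpow_nonneg hb r) hr', Real.rpow_rpow_inv hb hr.ne']

end ENNReal

section Moments

variable {X : Type*} [MeasurableSpace X] {m : Measure X}

theorem measure_le_ne_zero_of_lt_essSup {β : Type*} [ConditionallyCompleteLinearOrder β]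
    {g : X → β} {a : β} (hg : IsCoboundedUnder (· ≤ ·) (ae m) g) (ha : a < essSup g m) :
    m {x | a ≤ g x} ≠ 0 := by
  intro h
  have hlt : ∀ᵐ x ∂m, g x < a := by
    rw [ae_iff]
    simpa only [not_lt] using h
  exact ha.not_ge (essSup_le_of_ae_le a (hlt.mono fun _ => le_of_lt) hg)

theorem measure_le_ne_zero_of_essSup_ofReal_eq_top {g : X → ℝ}
    (hg : essSup (fun x => ENNReal.ofReal (g x)) m = ⊤) {a : ℝ} (ha : 0 < a) :
    m {x | a ≤ g x} ≠ 0 := by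
  have := measure_le_ne_zero_of_lt_essSup (m := m) (g := fun x => ENNReal.ofReal (g x))
    (a := ENNReal.ofReal a) (by isBoundedDefault) (hg ▸ ENNReal.ofReal_lt_top)
  simpa only [ENNReal.ofReal_le_ofReal_iff', ha.not_ge, or_false] using this

theorem lintegral_ofReal_rpow_neg {η : X → ℝ} (hη : ∀ x, 0 ≤ η x) (r : ℝ) :
    ∫⁻ x, ENNReal.ofReal (η x ^ (-r)) ∂m = ∫⁻ x, ENNReal.ofReal ((η x)⁻¹ ^ r) ∂m := by
  refine lintegral_congr fun x => ?_
  rw [Real.rpow_neg (hη x), Real.inv_rpow (hη x)]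

theorem lintegral_ofReal_rpow_le_of_ae_le {η : X → ℝ} {A r : ℝ} (hr : 0 ≤ r)
    (hη : ∀ᵐ x ∂m, 0 ≤ η x ∧ η x ≤ A) :
    ∫⁻ x, ENNReal.ofReal (η x ^ r) ∂m ≤ ENNReal.ofReal (A ^ r) * m Set.univ :=
  calc ∫⁻ x, ENNReal.ofReal (η x ^ r) ∂m ≤ ∫⁻ _, ENNReal.ofReal (A ^ r) ∂m :=
        lintegral_mono_ae <| hη.mono fun _ hx =>
          ENNReal.ofReal_le_ofReal (Real.rpow_le_rpow hx.1 hx.2 hr)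
    _ = ENNReal.ofReal (A ^ r) * m Set.univ := lintegral_const _

theorem lintegral_ofReal_rpow_le_add {η ζ : X → ℝ} {A B r : ℝ} (hA : 0 ≤ A) (hB : 0 ≤ B)
    (hr : 0 ≤ r) (hζ : ∀ x, 0 ≤ ζ x) (hη : ∀ x, 0 ≤ η x ∧ η x ≤ max (B * ζ x) A) :
    ∫⁻ x, ENNReal.ofReal (η x ^ r) ∂m ≤
      ENNReal.ofReal (B ^ r) * ∫⁻ x, ENNReal.ofReal (ζ x ^ r) ∂m +
        ENNReal.ofReal (A ^ r) * m Set.univ := by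
  have hpt : ∀ x, ENNReal.ofReal (η x ^ r) ≤
      ENNReal.ofReal (B ^ r) * ENNReal.ofReal (ζ x ^ r) + ENNReal.ofReal (A ^ r) := by
    intro x
    rw [← ENNReal.ofReal_mul (Real.rpow_nonneg hB r), ← ENNReal.ofReal_add
      (mul_nonneg (Real.rpow_nonneg hB r) (Real.rpow_nonneg (hζ x) r)) (Real.rpow_nonneg hA r),
      ← Real.mul_rpow hB (hζ x)]
    refine ENNReal.ofReal_le_ofReal ((Real.rpow_le_rpow (hη x).1 (hη x).2 hr).trans ?_)
    rcases le_total (B * ζ x) A with h | h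
    · rw [max_eq_right h]
      exact le_add_of_nonneg_left (Real.rpow_nonneg (mul_nonneg hB (hζ x)) r)
    · rw [max_eq_left h]
      exact le_add_of_nonneg_right (Real.rpow_nonneg hA r)
  calc ∫⁻ x, ENNReal.ofReal (η x ^ r) ∂m ≤
        ∫⁻ x, (ENNReal.ofReal (B ^ r) * ENNReal.ofReal (ζ x ^ r) + ENNReal.ofReal (A ^ r)) ∂m :=
        lintegral_mono hpt
    _ = _ := by
      rw [lintegral_add_right _ measurable_const, lintegral_const_mul' _ _ ENNReal.ofReal_ne_top,
        lintegral_const]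

variable [IsFiniteMeasure m]

/-- Markov's inequality on `{a ≤ ζ}`, rearranged. -/
theorem ofReal_rpow_mul_measure_univ_le {ζ : X → ℝ} {a A r : ℝ} (ha : 0 < a) (hA : 0 ≤ A)
    (hr : 0 ≤ r) (hζ : Measurable ζ) (hs : m {x | a ≤ ζ x} ≠ 0) :
    ENNReal.ofReal (A ^ r) * m Set.univ ≤
      ENNReal.ofReal ((A / a) ^ r) * (m Set.univ / m {x | a ≤ ζ x}) *
        ∫⁻ x, ENNReal.ofReal (ζ x ^ r) ∂m := by
  set s := {x | a ≤ ζ x}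
  have hmarkov : ENNReal.ofReal (a ^ r) * m s ≤ ∫⁻ x, ENNReal.ofReal (ζ x ^ r) ∂m :=
    calc ENNReal.ofReal (a ^ r) * m s
        ≤ ENNReal.ofReal (a ^ r) * m {x | ENNReal.ofReal (a ^ r) ≤ ENNReal.ofReal (ζ x ^ r)} :=
          mul_le_mul_right (measure_mono fun x hx =>
            ENNReal.ofReal_le_ofReal (Real.rpow_le_rpow ha.le hx hr)) _
      _ ≤ _ := mul_meas_ge_le_lintegral (hζ.pow_const r).ennreal_ofReal _
  have hsplit : ENNReal.ofReal (A ^ r) = ENNReal.ofReal ((A / a) ^ r) * ENNReal.ofReal (a ^ r) := by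
    rw [← ENNReal.ofReal_mul (by positivity), ← Real.mul_rpow (by positivity) ha.le,
      div_mul_cancel₀ A ha.ne']
  calc ENNReal.ofReal (A ^ r) * m Set.univ
      = ENNReal.ofReal ((A / a) ^ r) * (m Set.univ / m s) * (ENNReal.ofReal (a ^ r) * m s) := by
        conv_lhs => rw [hsplit, ← ENNReal.div_mul_cancel (b := m Set.univ) hs (measure_ne_top m s)]
        ring
    _ ≤ _ := mul_le_mul_right hmarkov _

end Moments

section Zhikov

variable {X : Type*} [MeasurableSpace X] {m : Measure X}

theorem Lconst_le_of_lintegral_rpow_le (p : ℝ) {η ζ : X → ℝ} (hη : ∀ x, 0 ≤ η x)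
    (hζ : ∀ x, 0 ≤ ζ x) {B₁ B₂ : ℝ} (hB₁ : 0 < B₁) (hB₂ : 0 < B₂) {C₁ C₂ : ℝ≥0∞}
    (hC₁0 : C₁ ≠ 0) (hC₁ : C₁ ≠ ⊤) (hC₂0 : C₂ ≠ 0) (hC₂ : C₂ ≠ ⊤)
    (h₁ : ∀ n : ℕ, ∫⁻ x, ENNReal.ofReal (η x ^ (n : ℝ)) ∂m ≤
      ENNReal.ofReal (B₁ ^ (n : ℝ)) * C₁ * ∫⁻ x, ENNReal.ofReal (ζ x ^ (n : ℝ)) ∂m)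
    (h₂ : ∀ n : ℕ, ∫⁻ x, ENNReal.ofReal ((η x)⁻¹ ^ (n : ℝ)) ∂m ≤
      ENNReal.ofReal (B₂ ^ (n : ℝ)) * C₂ * ∫⁻ x, ENNReal.ofReal ((ζ x)⁻¹ ^ (n : ℝ)) ∂m) :
    Lconst p m η ≤ ENNReal.ofReal (B₁ * B₂) * Lconst p m ζ := by
  set c : ℕ → ℝ≥0∞ := fun n =>
    ENNReal.ofReal B₁ * C₁ ^ (n : ℝ)⁻¹ * (ENNReal.ofReal B₂ * C₂ ^ (n : ℝ)⁻¹)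
  have hc : Tendsto c atTop (𝓝 (ENNReal.ofReal (B₁ * B₂))) := by
    have h₁ := ENNReal.Tendsto.const_mul (a := ENNReal.ofReal B₁)
      (ENNReal.tendsto_rpow_inv_natCast_nhds_one hC₁0 hC₁) (Or.inr ENNReal.ofReal_ne_top)
    have h₂ := ENNReal.Tendsto.const_mul (a := ENNReal.ofReal B₂)
      (ENNReal.tendsto_rpow_inv_natCast_nhds_one hC₂0 hC₂) (Or.inr ENNReal.ofReal_ne_top)
    rw [mul_one] at h₁ h₂
    simpa only [ENNReal.ofReal_mul hB₁.le] using
      ENNReal.Tendsto.mul h₁ (Or.inr ENNReal.ofReal_ne_top) h₂ (Or.inr ENNReal.ofReal_ne_top)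
  refine ENNReal.liminf_le_mul_liminf_of_tendsto (by simpa using mul_pos hB₁ hB₂)
    ENNReal.ofReal_ne_top hc ?_
  filter_upwards [eventually_gt_atTop 0] with n hn
  have hn' : (0 : ℝ) < n := Nat.cast_pos.2 hn
  simp only [lintegral_ofReal_rpow_neg hη, lintegral_ofReal_rpow_neg hζ]
  calc _ ≤ ENNReal.ofReal ((n : ℝ) ^ (-p)) *
        (ENNReal.ofReal B₁ * C₁ ^ (n : ℝ)⁻¹ *
          (∫⁻ x, ENNReal.ofReal (ζ x ^ (n : ℝ)) ∂m) ^ (n : ℝ)⁻¹) *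
        (ENNReal.ofReal B₂ * C₂ ^ (n : ℝ)⁻¹ *
          (∫⁻ x, ENNReal.ofReal ((ζ x)⁻¹ ^ (n : ℝ)) ∂m) ^ (n : ℝ)⁻¹) := by
        gcongr
        · exact ENNReal.rpow_inv_le_of_le_ofReal_rpow_mul hB₁.le hn' (h₁ n)
        · exact ENNReal.rpow_inv_le_of_le_ofReal_rpow_mul hB₂.le hn' (h₂ n)
    _ = c n * _ := by simp only [c]; ring

/-- `ρ_t x = scaleBelow t (ρ x)`. -/
noncomputable def scaleBelow (t u : ℝ) : ℝ := if u ≤ t then u / t else u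

theorem scaleBelow_pos {t u : ℝ} (ht : 0 < t) (hu : 0 < u) : 0 < scaleBelow t u := by
  unfold scaleBelow
  split_ifs
  exacts [div_pos hu ht, hu]

theorem scaleBelow_le_one_add {t u : ℝ} (ht : 0 < t) (hu : 0 ≤ u) : scaleBelow t u ≤ 1 + u := by
  unfold scaleBelow
  split_ifs with h
  · linarith [div_le_one_of_le₀ h ht.le, hu]
  · linarith

theorem inv_scaleBelow_le_max {t u : ℝ} (ht : 0 < t) :
    (scaleBelow t u)⁻¹ ≤ max (t * u⁻¹) t⁻¹ := by
  unfold scaleBelow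
  split_ifs with h
  · rw [inv_div, div_eq_mul_inv]; exact le_max_left _ _
  · exact (inv_anti₀ ht (not_le.1 h).le).trans (le_max_right _ _)

variable [IsFiniteMeasure m] {ρ : X → ℝ} {t r : ℝ}

theorem lintegral_scaleBelow_rpow_le (hρ : Measurable ρ) (hpos : ∀ x, 0 < ρ x) (ht : 0 < t)
    {S a : ℝ} (hS : 0 ≤ S) (hρS : ∀ᵐ x ∂m, ρ x ≤ S) (ha : 0 < a) (hr : 0 ≤ r)
    (hs : m {x | a ≤ ρ x} ≠ 0) :
    ∫⁻ x, ENNReal.ofReal (scaleBelow t (ρ x) ^ r) ∂m ≤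
      ENNReal.ofReal (((1 + S) / a) ^ r) * (m Set.univ / m {x | a ≤ ρ x}) *
        ∫⁻ x, ENNReal.ofReal (ρ x ^ r) ∂m := by
  have hbound : ∀ᵐ x ∂m, 0 ≤ scaleBelow t (ρ x) ∧ scaleBelow t (ρ x) ≤ 1 + S :=
    hρS.mono fun x hx => ⟨(scaleBelow_pos ht (hpos x)).le,
      (scaleBelow_le_one_add ht (hpos x).le).trans (by linarith)⟩
  exact (lintegral_ofReal_rpow_le_of_ae_le hr hbound).trans
    (ofReal_rpow_mul_measure_univ_le ha (by linarith) hr hρ hs)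

theorem lintegral_inv_scaleBelow_rpow_le (hρ : Measurable ρ) (hpos : ∀ x, 0 < ρ x) (ht : 0 < t)
    (hr : 0 ≤ r) (hs : m {x | (t ^ 2)⁻¹ ≤ (ρ x)⁻¹} ≠ 0) :
    ∫⁻ x, ENNReal.ofReal ((scaleBelow t (ρ x))⁻¹ ^ r) ∂m ≤
      ENNReal.ofReal (t ^ r) * (1 + m Set.univ / m {x | (t ^ 2)⁻¹ ≤ (ρ x)⁻¹}) *
        ∫⁻ x, ENNReal.ofReal ((ρ x)⁻¹ ^ r) ∂m := by
  calc _ ≤ ENNReal.ofReal (t ^ r) * ∫⁻ x, ENNReal.ofReal ((ρ x)⁻¹ ^ r) ∂m +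
        ENNReal.ofReal (t⁻¹ ^ r) * m Set.univ :=
        lintegral_ofReal_rpow_le_add (by positivity) ht.le hr (fun x => (inv_pos.2 (hpos x)).le)
          fun x => ⟨(inv_pos.2 (scaleBelow_pos ht (hpos x))).le, inv_scaleBelow_le_max ht⟩
    _ ≤ ENNReal.ofReal (t ^ r) * ∫⁻ x, ENNReal.ofReal ((ρ x)⁻¹ ^ r) ∂m +
        ENNReal.ofReal ((t⁻¹ / (t ^ 2)⁻¹) ^ r) * (m Set.univ / m {x | (t ^ 2)⁻¹ ≤ (ρ x)⁻¹}) *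
          ∫⁻ x, ENNReal.ofReal ((ρ x)⁻¹ ^ r) ∂m := by
        refine add_le_add le_rfl ?_
        exact ofReal_rpow_mul_measure_univ_le (ζ := fun x => (ρ x)⁻¹) (by positivity)
          (by positivity) hr hρ.inv hs
    _ = _ := by
        rw [show t⁻¹ / (t ^ 2)⁻¹ = t by field_simp]
        ring

end Zhikov

theorem stmt13_general {X : Type*} [MeasurableSpace X] (m : MeasureTheory.Measure X) (p : ℝ)
    (hX0 : 0 < m Set.univ) (hXfin : m Set.univ < ⊤)
    (ρ : X → ℝ) (hmeas : Measurable ρ) (hpos : ∀ x, 0 < ρ x)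
    (hbdd : ∃ C : ℝ, ∀ᵐ x ∂m, ρ x ≤ C)
    (hessinv : essSup (fun x => ENNReal.ofReal ((ρ x)⁻¹)) m = ⊤)
    (t : ℝ) (ht0 : 0 < t) :
    Lconst p m (fun x => if ρ x ≤ t then ρ x / t else ρ x) ≤
      ENNReal.ofReal (2 * t * (1 + (essSup ρ m)⁻¹)) * Lconst p m ρ := by
  have : IsFiniteMeasure m := ⟨hXfin⟩
  have hm : m ≠ 0 := Measure.measure_univ_pos.1 hX0
  have : (ae m).NeBot := ae_neBot.2 hm
  set S := essSup ρ m
  obtain ⟨C, hC⟩ := hbdd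
  have hρS : ∀ᵐ x ∂m, ρ x ≤ S := ae_le_essSup ⟨C, hC⟩
  have hS : 0 < S := by
    by_contra! hS
    exact hm (ae_eq_bot.1 (eventually_false_iff_eq_bot.1
      (hρS.mono fun x hx => (hpos x).not_ge (hx.trans hS))))
  have hbig : m {x | S / 2 ≤ ρ x} ≠ 0 := measure_le_ne_zero_of_lt_essSup
    (isCoboundedUnder_le_of_eventually_le _ (.of_forall fun x => (hpos x).le)) (half_lt_self hS)
  have hsmall : m {x | (t ^ 2)⁻¹ ≤ (ρ x)⁻¹} ≠ 0 :=
    measure_le_ne_zero_of_essSup_ofReal_eq_top hessinv (by positivity)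
  have hE : m Set.univ / m {x | S / 2 ≤ ρ x} ≠ ⊤ := ENNReal.div_ne_top (measure_ne_top m _) hbig
  have hF : 1 + m Set.univ / m {x | (t ^ 2)⁻¹ ≤ (ρ x)⁻¹} ≠ ⊤ :=
    ENNReal.add_ne_top.2 ⟨ENNReal.one_ne_top, ENNReal.div_ne_top (measure_ne_top m _) hsmall⟩
  calc Lconst p m (fun x => scaleBelow t (ρ x))
      ≤ ENNReal.ofReal ((1 + S) / (S / 2) * t) * Lconst p m ρ :=
        Lconst_le_of_lintegral_rpow_le p (fun x => (scaleBelow_pos ht0 (hpos x)).le)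
          (fun x => (hpos x).le) (by positivity) ht0
          (ENNReal.div_pos hX0.ne' (measure_ne_top m _)).ne' hE (by simp) hF
          (fun n => lintegral_scaleBelow_rpow_le hmeas hpos ht0 hS.le hρS (half_pos hS)
            n.cast_nonneg hbig)
          (fun n => lintegral_inv_scaleBelow_rpow_le hmeas hpos ht0 n.cast_nonneg hsmall)
    _ = ENNReal.ofReal (2 * t * (1 + S⁻¹)) * Lconst p m ρ := by
        congr 2
        field_simp
        ring

/-- Let `p > 1`, `0 < m(X) < ∞`, and `ρ : X → (0,∞)` essentially bounded
with `1/ρ` essentially unbounded. For `t > 0` let `ρ_t := ρ/t` on `{ρ ≤ t}` and `ρ_t := ρ`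
on `{ρ > t}`. Then `L_{ρ_t} ≤ 2t(1 + (esssup ρ)⁻¹) L_ρ`. -/
theorem stmt13 {X : Type*} [MeasurableSpace X] (m : MeasureTheory.Measure X) (p : ℝ)
    (hp : 1 < p) (hX0 : 0 < m Set.univ) (hXfin : m Set.univ < ⊤)
    (ρ : X → ℝ) (hmeas : Measurable ρ) (hpos : ∀ x, 0 < ρ x)
    (hbdd : ∃ C : ℝ, ∀ᵐ x ∂m, ρ x ≤ C)
    (hessinv : essSup (fun x => ENNReal.ofReal ((ρ x)⁻¹)) m = ⊤)
    (t : ℝ) (ht0 : 0 < t) :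
    Lconst p m (fun x => if ρ x ≤ t then ρ x / t else ρ x) ≤
      ENNReal.ofReal (2 * t * (1 + (essSup ρ m)⁻¹)) * Lconst p m ρ :=
  stmt13_general m p hX0 hXfin ρ hmeas hpos hbdd hessinv t ht0
end

section
/- Let (X, Σ, m) be a measure space with m(X) < ∞, let ρ : X → (0,∞) be measurable, and suppose there exists t > 0 such that ∫_X exp(t·ρ) dm < ∞ and ∫_X exp(t/ρ) dm < ∞. Then liminf_{n→∞} n^{−2} ( ∫_X ρⁿ dm )^{1/n} ( ∫_X ρ^{−n} dm )^{1/n} < ∞, i.e. ρ belongs to the Zhikov class Z₂(m). -/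
/-! Exponential integrability of `ρ` and of `1/ρ` with parameter `t` bounds the `n`-th moments
by `(n/t)^n` times a constant, since `(t y)^n ≤ n! e^{t y} ≤ n^n e^{t y}`. Hence both `n`-th root
norms grow at most like `n/t`, and their product divided by `n²` stays bounded. -/

open MeasureTheory Filter Topology
open scoped ENNReal NNReal

lemma Real.pow_le_div_pow_mul_exp {t y : ℝ} (ht : 0 < t) (hy : 0 ≤ y) (n : ℕ) :
    y ^ n ≤ (n / t) ^ n * Real.exp (t * y) := by
  have hfac : (t * y) ^ n ≤ n ^ n * Real.exp (t * y) :=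
    calc (t * y) ^ n ≤ n.factorial * Real.exp (t * y) := by
          have := Real.pow_div_factorial_le_exp (t * y) (mul_nonneg ht.le hy) n
          rwa [div_le_iff₀ (by positivity), mul_comm (Real.exp _)] at this
      _ ≤ n ^ n * Real.exp (t * y) := by
          gcongr
          exact_mod_cast Nat.factorial_le_pow n
  rw [div_pow, div_mul_eq_mul_div, le_div_iff₀ (by positivity)]
  linarith [mul_pow t y n]

lemma ENNReal.rpow_inv_natCast_le_max_one (a : ℝ≥0∞) {n : ℕ} (hn : n ≠ 0) :
    a ^ (n⁻¹ : ℝ) ≤ max a 1 :=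
  calc a ^ (n⁻¹ : ℝ) ≤ (max a 1) ^ (n⁻¹ : ℝ) := by gcongr; exact le_max_left a 1
    _ ≤ (max a 1) ^ (1 : ℝ) := by
        gcongr
        · exact le_max_right a 1
        · exact inv_le_one_of_one_le₀ (by exact_mod_cast Nat.one_le_iff_ne_zero.mpr hn)
    _ = max a 1 := ENNReal.rpow_one _

lemma lintegral_pow_rpow_inv_le {X : Type*} [MeasurableSpace X] (m : Measure X) {g : X → ℝ}
    (hg : ∀ x, 0 ≤ g x) {t : ℝ} (ht : 0 < t) {n : ℕ} (hn : n ≠ 0) :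
    (∫⁻ x, ENNReal.ofReal (g x ^ n) ∂m) ^ (n⁻¹ : ℝ) ≤
      ENNReal.ofReal (n / t) * max (∫⁻ x, ENNReal.ofReal (Real.exp (t * g x)) ∂m) 1 := by
  have hmoment : ∫⁻ x, ENNReal.ofReal (g x ^ n) ∂m ≤
      ENNReal.ofReal (n / t) ^ n * ∫⁻ x, ENNReal.ofReal (Real.exp (t * g x)) ∂m := by
    rw [← ENNReal.ofReal_pow (by positivity), ← lintegral_const_mul' _ _ ENNReal.ofReal_ne_top]
    refine lintegral_mono fun x => ?_
    rw [← ENNReal.ofReal_mul (by positivity)]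
    exact ENNReal.ofReal_le_ofReal (Real.pow_le_div_pow_mul_exp ht (hg x) n)
  calc (∫⁻ x, ENNReal.ofReal (g x ^ n) ∂m) ^ (n⁻¹ : ℝ)
      ≤ (ENNReal.ofReal (n / t) ^ n * ∫⁻ x, ENNReal.ofReal (Real.exp (t * g x)) ∂m) ^
          (n⁻¹ : ℝ) := by gcongr
    _ = ENNReal.ofReal (n / t) * (∫⁻ x, ENNReal.ofReal (Real.exp (t * g x)) ∂m) ^ (n⁻¹ : ℝ) := by
        rw [ENNReal.mul_rpow_of_nonneg _ _ (by positivity), ENNReal.pow_rpow_inv_natCast hn]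
    _ ≤ _ := by gcongr; exact ENNReal.rpow_inv_natCast_le_max_one _ hn

lemma Lconst_two_le {X : Type*} [MeasurableSpace X] (m : Measure X) {ρ : X → ℝ}
    (hpos : ∀ x, 0 < ρ x) {t : ℝ} (ht : 0 < t) :
    Lconst 2 m ρ ≤ ENNReal.ofReal (t⁻¹ ^ 2) *
      max (∫⁻ x, ENNReal.ofReal (Real.exp (t * ρ x)) ∂m) 1 *
      max (∫⁻ x, ENNReal.ofReal (Real.exp (t / ρ x)) ∂m) 1 := by
  refine liminf_le_of_frequently_le (Eventually.frequently ?_)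
  filter_upwards [eventually_ne_atTop 0] with n hn
  have hρ : (∫⁻ x, ENNReal.ofReal (ρ x ^ (n : ℝ)) ∂m) ^ (n⁻¹ : ℝ) ≤ ENNReal.ofReal (n / t) *
      max (∫⁻ x, ENNReal.ofReal (Real.exp (t * ρ x)) ∂m) 1 := by
    simpa only [Real.rpow_natCast] using
      lintegral_pow_rpow_inv_le m (fun x => (hpos x).le) ht hn
  have hρinv : (∫⁻ x, ENNReal.ofReal (ρ x ^ (-(n : ℝ))) ∂m) ^ (n⁻¹ : ℝ) ≤
      ENNReal.ofReal (n / t) * max (∫⁻ x, ENNReal.ofReal (Real.exp (t / ρ x)) ∂m) 1 := by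
    simpa only [Real.rpow_neg (hpos _).le, Real.rpow_natCast, inv_pow, div_eq_mul_inv] using
      lintegral_pow_rpow_inv_le m (fun x => (inv_pos.mpr (hpos x)).le) ht hn
  have hscale : (n : ℝ) ^ (-2 : ℝ) * (n / t) * (n / t) = t⁻¹ ^ 2 := by
    have : (n : ℝ) ≠ 0 := Nat.cast_ne_zero.mpr hn
    rw [Real.rpow_neg (Nat.cast_nonneg n), Real.rpow_two]
    field_simp
  calc _ ≤ ENNReal.ofReal ((n : ℝ) ^ (-2 : ℝ)) *
        (ENNReal.ofReal (n / t) * max (∫⁻ x, ENNReal.ofReal (Real.exp (t * ρ x)) ∂m) 1) *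
        (ENNReal.ofReal (n / t) * max (∫⁻ x, ENNReal.ofReal (Real.exp (t / ρ x)) ∂m) 1) := by
        gcongr
    _ = _ := by
        rw [← hscale, ENNReal.ofReal_mul (by positivity), ENNReal.ofReal_mul (by positivity)]
        ring

theorem stmt14_general {X : Type*} [MeasurableSpace X] (m : MeasureTheory.Measure X)
    (ρ : X → ℝ) (hpos : ∀ x, 0 < ρ x)
    (h : ∃ t : ℝ, 0 < t ∧
      (∫⁻ x, ENNReal.ofReal (Real.exp (t * ρ x)) ∂m) < ⊤ ∧
      (∫⁻ x, ENNReal.ofReal (Real.exp (t / ρ x)) ∂m) < ⊤) :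
    Lconst 2 m ρ < ⊤ := by
  obtain ⟨t, ht, hA, hB⟩ := h
  refine (Lconst_two_le m hpos ht).trans_lt ?_
  exact ENNReal.mul_lt_top (ENNReal.mul_lt_top ENNReal.ofReal_lt_top
    (max_lt hA ENNReal.one_lt_top)) (max_lt hB ENNReal.one_lt_top)

/-- If `m(X) < ∞`, `ρ : X → (0,∞)` is measurable, and there is `t > 0`
with `∫ exp(tρ) dm < ∞` and `∫ exp(t/ρ) dm < ∞`, then
`liminf_n n^{−2} (∫ ρ^n dm)^{1/n} (∫ ρ^{−n} dm)^{1/n} < ∞`, i.e. `ρ ∈ Z₂(m)`. -/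
theorem stmt14 {X : Type*} [MeasurableSpace X] (m : MeasureTheory.Measure X)
    (hXfin : m Set.univ < ⊤)
    (ρ : X → ℝ) (hmeas : Measurable ρ) (hpos : ∀ x, 0 < ρ x)
    (h : ∃ t : ℝ, 0 < t ∧
      (∫⁻ x, ENNReal.ofReal (Real.exp (t * ρ x)) ∂m) < ⊤ ∧
      (∫⁻ x, ENNReal.ofReal (Real.exp (t / ρ x)) ∂m) < ⊤) :
    Lconst 2 m ρ < ⊤ :=
  stmt14_general m ρ hpos h
end

section
/- Let B := { x ∈ ℝ² : |x| < 1 } be the open unit ball with 2-dimensional Lebesgue measure, and define ρ : B → (0,∞) by ρ(x) := log(e/|x|) if x₁x₂ > 0, ρ(x) := 1/log(e/|x|) if x₁x₂ < 0, and ρ(x) := 1 if x₁x₂ = 0 (note log(e/|x|) ≥ 1 on B). Then both x ↦ exp(ρ(x)) and x ↦ exp(1/ρ(x)) are Lebesgue-integrable on B; consequently liminf_{n→∞} n^{−2} ( ∫_B ρⁿ dx )^{1/n} ( ∫_B ρ^{−n} dx )^{1/n} < ∞, i.e. ρ belongs to the Zhikov class Z₂. -/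
open MeasureTheory Filter Topology
open scoped ENNReal NNReal

/-- Zhikov's weight on the unit ball of `ℝ²`: `ρ(x) = log(e/|x|)` if `x₁x₂ > 0`,
`ρ(x) = 1/log(e/|x|)` if `x₁x₂ < 0`, and `ρ(x) = 1` if `x₁x₂ = 0`. -/
noncomputable def zhikovWeight (x : EuclideanSpace ℝ (Fin 2)) : ℝ :=
  if 0 < x 0 * x 1 then Real.log (Real.exp 1 / ‖x‖)
  else if x 0 * x 1 < 0 then 1 / Real.log (Real.exp 1 / ‖x‖)
  else 1

/-!
On the unit disc both `ρ` and `1/ρ` are at most `log (e/|x|)`, so `exp ρ` and `exp (1/ρ)` are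
dominated by `e/|x|`, which is integrable in dimension two. Since `tⁿ ≤ n! eᵗ` and `n! ≤ nⁿ`, the
`n`-th roots of `∫ ρⁿ` and `∫ ρ⁻ⁿ` are `O(n)`, so `n⁻² (∫ ρⁿ)^{1/n} (∫ ρ⁻ⁿ)^{1/n}` stays bounded.
-/

open Set Metric Real Nat

section ExpIntegrability

variable {X : Type*} [MeasurableSpace X] {μ : Measure X}

lemma lintegral_pow_le_factorial_mul_lintegral_exp {f : X → ℝ} (hf : 0 ≤ᵐ[μ] f) (n : ℕ) :
    ∫⁻ x, ENNReal.ofReal (f x ^ n) ∂μ ≤ n ! * ∫⁻ x, ENNReal.ofReal (exp (f x)) ∂μ := by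
  rw [← lintegral_const_mul' _ _ (ENNReal.natCast_ne_top _)]
  refine lintegral_mono_ae ?_
  filter_upwards [hf] with x hx
  rw [← ENNReal.ofReal_natCast, ← ENNReal.ofReal_mul (by positivity)]
  refine ENNReal.ofReal_le_ofReal ?_
  have := Real.pow_div_factorial_le_exp _ hx n
  rwa [div_le_iff₀' (by positivity)] at this

lemma lintegral_pow_rpow_inv_le_s15 {f : X → ℝ} (hf : 0 ≤ᵐ[μ] f) {n : ℕ} (hn : n ≠ 0) :
    (∫⁻ x, ENNReal.ofReal (f x ^ n) ∂μ) ^ (n : ℝ)⁻¹ ≤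
      n * max 1 (∫⁻ x, ENNReal.ofReal (exp (f x)) ∂μ) := by
  set M := max 1 (∫⁻ x, ENNReal.ofReal (exp (f x)) ∂μ)
  have hM : 1 ≤ M := le_max_left _ _
  rw [ENNReal.rpow_inv_le_iff (by positivity), ENNReal.rpow_natCast, mul_pow]
  calc ∫⁻ x, ENNReal.ofReal (f x ^ n) ∂μ
      ≤ n ! * M := by
        grw [lintegral_pow_le_factorial_mul_lintegral_exp hf n]
        gcongr
        exact le_max_right _ _
    _ ≤ (n : ℝ≥0∞) ^ n * M ^ n := by
      gcongr
      · exact_mod_cast factorial_le_pow n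
      · exact le_self_pow₀ hM hn

lemma ofReal_rpow_neg_two_mul_self_mul_self {n : ℕ} (hn : n ≠ 0) :
    ENNReal.ofReal ((n : ℝ) ^ (-2 : ℝ)) * n * n = 1 := by
  rw [← ENNReal.ofReal_natCast, ← ENNReal.ofReal_mul (by positivity),
    ← ENNReal.ofReal_mul (by positivity), ← ENNReal.ofReal_one]
  congr 1
  rw [Real.rpow_neg (by positivity), show (2 : ℝ) = (2 : ℕ) by norm_num, Real.rpow_natCast]
  field_simp

theorem Lconst_two_lt_top_of_integrable_exp {η : X → ℝ} (hη : ∀ᵐ x ∂μ, 0 < η x)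
    (hexp : Integrable (fun x => exp (η x)) μ)
    (hexp_inv : Integrable (fun x => exp (1 / η x)) μ) :
    Lconst 2 μ η < ⊤ := by
  set K := max 1 (∫⁻ x, ENNReal.ofReal (exp (η x)) ∂μ) *
    max 1 (∫⁻ x, ENNReal.ofReal (exp (1 / η x)) ∂μ)
  have hK : K < ⊤ := ENNReal.mul_lt_top (max_lt ENNReal.one_lt_top hexp.lintegral_lt_top)
    (max_lt ENNReal.one_lt_top hexp_inv.lintegral_lt_top)
  refine lt_of_le_of_lt ?_ hK
  have hterm : ∀ n : ℕ, n ≠ 0 →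
      ENNReal.ofReal ((n : ℝ) ^ (-(2 : ℝ))) *
        (∫⁻ x, ENNReal.ofReal (η x ^ (n : ℝ)) ∂μ) ^ (n : ℝ)⁻¹ *
        (∫⁻ x, ENNReal.ofReal (η x ^ (-(n : ℝ))) ∂μ) ^ (n : ℝ)⁻¹ ≤ K := by
    intro n hn
    have hpow : ∫⁻ x, ENNReal.ofReal (η x ^ (n : ℝ)) ∂μ = ∫⁻ x, ENNReal.ofReal (η x ^ n) ∂μ :=
      lintegral_congr fun x => by rw [Real.rpow_natCast]
    have hpow_neg : ∫⁻ x, ENNReal.ofReal (η x ^ (-(n : ℝ))) ∂μ =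
        ∫⁻ x, ENNReal.ofReal ((1 / η x) ^ n) ∂μ := by
      refine lintegral_congr_ae ?_
      filter_upwards [hη] with x hx
      rw [Real.rpow_neg hx.le, Real.rpow_natCast, one_div, inv_pow]
    have hinv : 0 ≤ᵐ[μ] fun x => 1 / η x := by
      filter_upwards [hη] with x hx using by positivity
    rw [hpow, hpow_neg]
    calc _ ≤ ENNReal.ofReal ((n : ℝ) ^ (-(2 : ℝ))) *
          (n * max 1 (∫⁻ x, ENNReal.ofReal (exp (η x)) ∂μ)) *
          (n * max 1 (∫⁻ x, ENNReal.ofReal (exp (1 / η x)) ∂μ)) := by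
          gcongr
          · exact lintegral_pow_rpow_inv_le_s15 (hη.mono fun x hx => hx.le) hn
          · exact lintegral_pow_rpow_inv_le_s15 hinv hn
      _ = ENNReal.ofReal ((n : ℝ) ^ (-2 : ℝ)) * n * n * K := by ring
      _ = K := by rw [ofReal_rpow_neg_two_mul_self_mul_self hn, one_mul]
  calc Lconst 2 μ η ≤ liminf (fun _ : ℕ => K) atTop :=
        liminf_le_liminf (eventually_atTop.2 ⟨1, fun n hn => hterm n (by omega)⟩)
    _ = K := liminf_const K

end ExpIntegrability

lemma one_le_log_exp_one_div {r : ℝ} (hr : 0 < r) (hr₁ : r ≤ 1) : 1 ≤ log (exp 1 / r) := by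
  rw [log_div (exp_pos 1).ne' hr.ne', log_exp]
  linarith [log_nonpos hr.le hr₁]

section LogSingularity

variable {E : Type*} [NormedAddCommGroup E] [NormedSpace ℝ E] [FiniteDimensional ℝ E]
  [MeasurableSpace E] [BorelSpace E] {μ : Measure E} [μ.IsAddHaarMeasure]

lemma integrableOn_exp_of_le_log_exp_one_div (hE : 1 < Module.finrank ℝ E) {f : E → ℝ}
    (hf : Measurable f) (hle : ∀ x : E, x ≠ 0 → ‖x‖ < 1 → f x ≤ log (exp 1 / ‖x‖)) :
    IntegrableOn (fun x => exp (f x)) (ball 0 1) μ := by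
  have : Nontrivial E := Module.nontrivial_of_finrank_pos (R := ℝ) (by omega)
  refine integrableOn_ball_of_norm_le_rpow (C := exp 1) (α := 1) hE.le (by exact_mod_cast hE) ?_
    (hf.exp).aestronglyMeasurable
  filter_upwards [ae_restrict_mem measurableSet_ball, ae_restrict_of_ae (μ.ae_ne 0)]
    with x hx hx₀
  have hnorm : 0 < ‖x‖ := norm_pos_iff.2 hx₀
  calc ‖exp (f x)‖ = exp (f x) := norm_of_nonneg (exp_pos _).le
    _ ≤ exp (log (exp 1 / ‖x‖)) := exp_le_exp.2 (hle x hx₀ (mem_ball_zero_iff.1 hx))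
    _ = exp 1 * ‖x‖ ^ (-1 : ℝ) := by
      rw [exp_log (by positivity), rpow_neg_one, div_eq_mul_inv]

end LogSingularity

lemma measurable_zhikovWeight : Measurable zhikovWeight := by
  have hprod : Measurable fun x : EuclideanSpace ℝ (Fin 2) => x 0 * x 1 := by fun_prop
  have hlog : Measurable fun x : EuclideanSpace ℝ (Fin 2) => log (exp 1 / ‖x‖) :=
    measurable_log.comp (measurable_const.div measurable_norm)
  exact (hlog.ite (measurableSet_lt measurable_const hprod)
    ((measurable_const.div hlog).ite (measurableSet_lt hprod measurable_const) measurable_const))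

lemma zhikovWeight_pos {x : EuclideanSpace ℝ (Fin 2)} (hx : ‖x‖ ≤ 1) : 0 < zhikovWeight x := by
  rcases eq_or_ne x 0 with rfl | hx₀
  · simp [zhikovWeight]
  have hL := one_le_log_exp_one_div (norm_pos_iff.2 hx₀) hx
  unfold zhikovWeight
  split_ifs <;> positivity

lemma max_zhikovWeight_one_div_le {x : EuclideanSpace ℝ (Fin 2)} (hx₀ : x ≠ 0) (hx : ‖x‖ ≤ 1) :
    max (zhikovWeight x) (1 / zhikovWeight x) ≤ log (exp 1 / ‖x‖) := by
  have hL := one_le_log_exp_one_div (norm_pos_iff.2 hx₀) hx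
  have hL_inv : 1 / log (exp 1 / ‖x‖) ≤ 1 := (div_le_one (by positivity)).2 hL
  unfold zhikovWeight
  split_ifs
  · exact max_le le_rfl (hL_inv.trans hL)
  · rw [one_div_one_div]
    exact max_le (hL_inv.trans hL) le_rfl
  · simpa using hL

/-- Both `exp(ρ)` and `exp(1/ρ)` are Lebesgue-integrable on the unit ball
`B ⊆ ℝ²` for Zhikov's weight `ρ`; consequently `ρ` belongs to the Zhikov class `Z₂` on `B`. -/
theorem stmt15 :
    MeasureTheory.IntegrableOn (fun x => Real.exp (zhikovWeight x))
      (Metric.ball (0 : EuclideanSpace ℝ (Fin 2)) 1) MeasureTheory.volume ∧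
    MeasureTheory.IntegrableOn (fun x => Real.exp (1 / zhikovWeight x))
      (Metric.ball (0 : EuclideanSpace ℝ (Fin 2)) 1) MeasureTheory.volume ∧
    Lconst 2 (MeasureTheory.volume.restrict (Metric.ball (0 : EuclideanSpace ℝ (Fin 2)) 1))
      zhikovWeight < ⊤ := by
  have hdim : 1 < Module.finrank ℝ (EuclideanSpace ℝ (Fin 2)) := by simp
  have hexp := integrableOn_exp_of_le_log_exp_one_div (μ := volume) hdim measurable_zhikovWeight
    fun x hx₀ hx => (le_max_left _ _).trans (max_zhikovWeight_one_div_le hx₀ hx.le)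
  have hexp_inv := integrableOn_exp_of_le_log_exp_one_div (μ := volume) hdim
    (measurable_const.div measurable_zhikovWeight)
    fun x hx₀ hx => (le_max_right _ _).trans (max_zhikovWeight_one_div_le hx₀ hx.le)
  have hpos : ∀ᵐ x ∂volume.restrict (ball (0 : EuclideanSpace ℝ (Fin 2)) 1),
      0 < zhikovWeight x := by
    filter_upwards [ae_restrict_mem measurableSet_ball] with x hx
    exact zhikovWeight_pos (mem_ball_zero_iff.1 hx).le
  exact ⟨hexp, hexp_inv, Lconst_two_lt_top_of_integrable_exp hpos hexp hexp_inv⟩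
end
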